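/- arXiv:2406.17217 — 8 statements merged into one kernel-verified Lean document; each statement's English description precedes it below -/
import Mathlib

section
/- Let X be a topological space, f a double sequence in X, and x ∈ X. Then: (a) if x is the FIN²-limit of f, then x is the p²-limit of f for every free ultrafilter p on ℕ; (b) if x is the p²-limit of f for some free ultrafilter p on ℕ, then x is a 2-accumulation point of f; (c) if x is a 2-accumulation point of f, then x is a 2-limit point of f. -/
/-- An ultrafilter on ℕ is free (nonprincipal) if it contains no finite set. -/
def IsFree (p : Ultrafilter ℕ) : Prop := ∀ A : Set ℕ, A.Finite → A ∉ p

/-- The Fubini product `p ⊗ q` of ultrafilters on ℕ: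
`A ∈ p ⊗ q ↔ {n | {m | (n, m) ∈ A} ∈ q} ∈ p`. -/
def fubini (p q : Ultrafilter ℕ) : Ultrafilter (ℕ × ℕ) :=
  p.bind fun n => q.map fun m => (n, m)

/-- Membership in the ideal FIN²: subsets of `{(n,m) | n < m}` all of whose vertical
sections are finite, except for finitely many. -/
def MemFIN2 (A : Set (ℕ × ℕ)) : Prop :=
  (∀ z ∈ A, z.1 < z.2) ∧ {n : ℕ | ¬ {m : ℕ | (n, m) ∈ A}.Finite}.Finite

/-- `x` is the FIN²-limit of the double sequence `f`. -/
def IsFIN2Limit {X : Type*} [TopologicalSpace X] (f : ℕ → ℕ → X) (x : X) : Prop :=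
  ∀ U : Set X, IsOpen U → x ∈ U → MemFIN2 {z : ℕ × ℕ | z.1 < z.2 ∧ f z.1 z.2 ∉ U}

/-- `x` is the p²-limit of the double sequence `f`. -/
def IsP2Limit {X : Type*} [TopologicalSpace X] (p : Ultrafilter ℕ) (f : ℕ → ℕ → X) (x : X) :
    Prop :=
  ∀ U : Set X, IsOpen U → x ∈ U → {z : ℕ × ℕ | z.1 < z.2 ∧ f z.1 z.2 ∈ U} ∈ fubini p p

/-- `x` is a 2-accumulation point of the double sequence `f`. -/
def Is2AccPoint {X : Type*} [TopologicalSpace X] (f : ℕ → ℕ → X) (x : X) : Prop :=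
  ∀ U : Set X, IsOpen U → x ∈ U →
    ∃ M : Set ℕ, M.Infinite ∧ ∀ n ∈ M, ∀ m ∈ M, n < m → f n m ∈ U

/-- `x` is a 2-limit point of the double sequence `f`. -/
def Is2LimitPoint {X : Type*} [TopologicalSpace X] (f : ℕ → ℕ → X) (x : X) : Prop :=
  ∀ U : Set X, IsOpen U → x ∈ U → ¬ MemFIN2 {z : ℕ × ℕ | z.1 < z.2 ∧ f z.1 z.2 ∈ U}

lemma mem_fubini' (p q : Ultrafilter ℕ) (A : Set (ℕ × ℕ)) :
    A ∈ (p.bind fun n => q.map fun m => (n, m)) ↔ {n | {m | (n,m) ∈ A} ∈ q} ∈ p := by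
  change A ∈ ((p : Filter ℕ).bind fun n => Filter.map (fun m => (n, m)) (q : Filter ℕ)) ↔ _
  rw [Filter.mem_bind']
  rfl

lemma free_cofinite {p : Ultrafilter ℕ} (hp : IsFree p) {A : Set ℕ} (hA : A.Finite) :
    Aᶜ ∈ p := (Ultrafilter.compl_mem_iff_notMem).2 (hp A hA)

theorem fin2_limit_implies_p2_limit_implies_acc_implies_limit
    {X : Type*} [TopologicalSpace X] (f : ℕ → ℕ → X) (x : X) :
    (IsFIN2Limit f x → ∀ p : Ultrafilter ℕ, IsFree p → IsP2Limit p f x) ∧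
    ((∃ p : Ultrafilter ℕ, IsFree p ∧ IsP2Limit p f x) → Is2AccPoint f x) ∧
    (Is2AccPoint f x → Is2LimitPoint f x) := by
  refine ⟨?_, ?_, ?_⟩
  · -- (a)
    intro h p hp U hU hxU
    obtain ⟨-, hB⟩ := h U hU hxU
    rw [fubini, mem_fubini']
    apply Filter.mem_of_superset (free_cofinite hp hB)
    intro n hn
    have hfin : {m | n < m ∧ f n m ∉ U}.Finite := not_not.1 hn
    have hsub : ({m | n < m ∧ f n m ∉ U} ∪ {m | m ≤ n})ᶜ ⊆ {m | (n, m) ∈ {z : ℕ × ℕ | z.1 < z.2 ∧ f z.1 z.2 ∈ U}} := by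
      intro m hm
      simp only [Set.mem_compl_iff, Set.mem_union, Set.mem_setOf_eq, not_or, not_and, not_le,
        not_not] at hm
      exact ⟨hm.2, hm.1 hm.2⟩
    exact Filter.mem_of_superset
      (free_cofinite hp (hfin.union (Set.finite_Iic n))) hsub
  · -- (b)
    rintro ⟨p, hp, hlim⟩ U hU hxU
    have hS : {n | {m | n < m ∧ f n m ∈ U} ∈ p} ∈ p := by
      have := hlim U hU hxU
      rw [fubini, mem_fubini'] at this
      exact this
    set S := {n | {m | n < m ∧ f n m ∈ U} ∈ p} with hSdef
    classical
    let pick : Set ℕ → ℕ := fun A => if h : A.Nonempty then h.choose else 0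
    have pick_mem : ∀ A : Set ℕ, A ∈ p → pick A ∈ A := by
      intro A hA
      have hne : A.Nonempty := Ultrafilter.nonempty_of_mem hA
      simpa [pick, hne] using hne.choose_spec
    let T : ℕ → Set ℕ := fun k => Nat.rec S
      (fun _ Tk => Tk ∩ {m | pick Tk < m ∧ f (pick Tk) m ∈ U}) k
    have hT0 : T 0 = S := rfl
    have hTs : ∀ k, T (k + 1) = T k ∩ {m | pick (T k) < m ∧ f (pick (T k)) m ∈ U} :=
      fun k => rfl
    have hTmem : ∀ k, T k ∈ p := by
      intro k
      induction k with
      | zero => exact hS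
      | succ k ih =>
        rw [hTs k]
        have hpS : pick (T k) ∈ S := by
          have hsub : T k ⊆ S := by
            clear ih
            induction k with
            | zero => exact le_refl _
            | succ k ih => rw [hTs k]; exact (Set.inter_subset_left).trans ih
          exact hsub (pick_mem _ ih)
        exact Filter.inter_mem ih hpS
    let a : ℕ → ℕ := fun k => pick (T k)
    have ha_mem : ∀ k, a k ∈ T k := fun k => pick_mem _ (hTmem k)
    have hTanti : ∀ i j, i ≤ j → T j ⊆ T i := by
      intro i j hij
      induction j with
      | zero => simp_all
      | succ j ih =>
        rcases Nat.lt_or_ge i (j+1) with h | h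
        · exact (hTs j ▸ Set.inter_subset_left).trans (ih (Nat.lt_succ_iff.1 h))
        · have : i = j + 1 := le_antisymm hij h
          subst this; exact le_refl _
    have key : ∀ i j, i < j → a i < a j ∧ f (a i) (a j) ∈ U := by
      intro i j hij
      have : a j ∈ T (i + 1) := hTanti (i+1) j hij (ha_mem j)
      rw [hTs i] at this
      exact this.2
    have hmono : StrictMono a := strictMono_nat_of_lt_succ fun k => (key k (k+1) (Nat.lt_succ_self k)).1
    refine ⟨Set.range a, Set.infinite_range_of_injective hmono.injective, ?_⟩
    rintro n ⟨i, rfl⟩ m ⟨j, rfl⟩ hnm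
    have hij : i < j := by
      by_contra hc
      exact absurd (hmono.le_iff_le.2 (Nat.le_of_not_lt hc)) (not_le.2 hnm)
    exact (key i j hij).2
  · -- (c)
    intro hacc U hU hxU hmem
    obtain ⟨M, hMinf, hM⟩ := hacc U hU hxU
    obtain ⟨-, hB⟩ := hmem
    obtain ⟨n, hnM, hnB⟩ := (hMinf.diff hB).nonempty
    have hfin : {m | (n, m) ∈ {z : ℕ × ℕ | z.1 < z.2 ∧ f z.1 z.2 ∈ U}}.Finite := not_not.1 hnB
    have hsub : M \ Set.Iic n ⊆ {m | (n, m) ∈ {z : ℕ × ℕ | z.1 < z.2 ∧ f z.1 z.2 ∈ U}} := by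
      rintro m ⟨hmM, hmn⟩
      have hlt : n < m := not_le.1 hmn
      exact ⟨hlt, hM n hnM m hmM hlt⟩
    exact ((hMinf.diff (Set.finite_Iic n)).mono hsub) hfin
end

section
/- A topological space X is sequentially compact if and only if it is FIN²-compact, that is: for every double sequence f in X there exist an infinite set M ⊆ ℕ and a point x ∈ X such that for every open neighborhood U of x, for all but finitely many n ∈ M one has f(n,m) ∈ U for all but finitely many m ∈ M with m > n. -/
open Filter Topology Set

/-- Cofinite convergence of `g` to `x` along the set `A`. -/
def ConvOn {X : Type*} [TopologicalSpace X] (A : Set ℕ) (g : ℕ → X) (x : X) : Prop :=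
  ∀ U : Set X, IsOpen U → x ∈ U → {m ∈ A | g m ∉ U}.Finite

lemma exists_enum {A : Set ℕ} (hA : A.Infinite) :
    ∃ e : ℕ → ℕ, StrictMono e ∧ Set.range e = A := by
  classical
  haveI := hA.to_subtype
  exact ⟨Nat.orderEmbeddingOfSet A, (Nat.orderEmbeddingOfSet A).strictMono,
    Nat.orderEmbeddingOfSet_range A⟩

lemma extract {X : Type*} [TopologicalSpace X] [SeqCompactSpace X]
    (g : ℕ → X) {A : Set ℕ} (hA : A.Infinite) :
    ∃ B, B ⊆ A ∧ B.Infinite ∧ ∃ x, ConvOn B g x := by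
  obtain ⟨e, he, hrange⟩ := exists_enum hA
  obtain ⟨a, φ, hφ, hconv⟩ := SeqCompactSpace.tendsto_subseq (g ∘ e)
  refine ⟨Set.range (e ∘ φ), ?_, Set.infinite_range_of_injective (he.comp hφ).injective,
    a, ?_⟩
  · rintro m ⟨k, rfl⟩
    rw [← hrange]; exact ⟨φ k, rfl⟩
  · intro U hU haU
    obtain ⟨N, hN⟩ := Filter.eventually_atTop.mp (hconv (hU.mem_nhds haU))
    refine ((Set.finite_Iio N).image (e ∘ φ)).subset ?_
    rintro m ⟨⟨k, rfl⟩, hm⟩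
    refine ⟨k, ?_, rfl⟩
    by_contra hk
    exact hm (hN k (le_of_not_gt hk))

/-- Sequential compactness is equivalent to FIN²-compactness. -/
theorem seqCompact_iff_fin2_compact {X : Type*} [TopologicalSpace X] :
    SeqCompactSpace X ↔
      ∀ f : ℕ → ℕ → X, ∃ M : Set ℕ, M.Infinite ∧ ∃ x : X,
        ∀ U : Set X, IsOpen U → x ∈ U →
          {n ∈ M | ¬ {m ∈ M | n < m ∧ f n m ∉ U}.Finite}.Finite := by
  constructor
  · intro h f
    haveI := h
    classical
    -- step construction
    have step_ex : ∀ s : {p : ℕ × Set ℕ // p.2.Infinite},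
        ∃ t : {p : ℕ × Set ℕ // p.2.Infinite},
          t.1.1 ∈ s.1.2 ∧ s.1.1 < t.1.1 ∧ t.1.2 ⊆ s.1.2 ∧
            ∃ x, ConvOn t.1.2 (f t.1.1) x := by
      rintro ⟨⟨n, A⟩, hA⟩
      obtain ⟨n', hn'A, hn'⟩ := hA.exists_gt n
      obtain ⟨B, hBA, hBinf, hx⟩ := extract (f n') hA
      exact ⟨⟨(n', B), hBinf⟩, hn'A, hn', hBA, hx⟩
    choose step hmem hlt hsub hex using step_ex
    set s : ℕ → {p : ℕ × Set ℕ // p.2.Infinite} :=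
      fun k => step^[k] ⟨(0, Set.univ), Set.infinite_univ⟩ with hs
    have hsucc : ∀ k, s (k + 1) = step (s k) := fun k =>
      Function.iterate_succ_apply' step k _
    set n : ℕ → ℕ := fun k => (s (k + 1)).1.1 with hn
    set A : ℕ → Set ℕ := fun k => (s (k + 1)).1.2 with hA
    have hnmono : StrictMono n := by
      apply strictMono_nat_of_lt_succ
      intro k
      have := hlt (s (k + 1))
      rw [← hsucc (k + 1)] at this
      exact this
    have hmemA : ∀ k, n (k + 1) ∈ A k := by
      intro k
      have := hmem (s (k + 1))
      rw [← hsucc (k + 1)] at this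
      exact this
    have hanti : Antitone A := by
      apply antitone_nat_of_succ_le
      intro k
      have := hsub (s (k + 1))
      rw [← hsucc (k + 1)] at this
      exact this
    have hAx : ∀ k, ∃ x, ConvOn (A k) (f (n k)) x := by
      intro k
      have := hex (s k)
      rw [← hsucc k] at this
      exact this
    choose xs hxs using hAx
    have hnA : ∀ j k, j < k → n k ∈ A j := by
      intro j k hjk
      rcases k with _ | k'
      · omega
      · exact hanti (by omega : j ≤ k') (hmemA k')
    obtain ⟨x, φ, hφ, hconv⟩ := SeqCompactSpace.tendsto_subseq xs
    refine ⟨Set.range (n ∘ φ),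
      Set.infinite_range_of_injective (hnmono.comp hφ).injective, x, ?_⟩
    intro U hU hxU
    obtain ⟨N, hN⟩ := Filter.eventually_atTop.mp (hconv (hU.mem_nhds hxU))
    refine ((Set.finite_Iio N).image (n ∘ φ)).subset ?_
    rintro n' ⟨⟨k, rfl⟩, hbad⟩
    refine ⟨k, ?_, rfl⟩
    by_contra hk
    apply hbad
    refine (hxs (φ k) U hU (hN k (le_of_not_gt hk))).subset ?_
    rintro m ⟨⟨j, rfl⟩, hlt', hm⟩
    exact ⟨hnA (φ k) (φ j) (hnmono.lt_iff_lt.mp hlt'), hm⟩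
  · intro h
    constructor
    intro u _
    obtain ⟨M, hM, x, hx⟩ := h fun _ m => u m
    obtain ⟨e, he, hrange⟩ := exists_enum hM
    refine ⟨x, Set.mem_univ x, e, he, ?_⟩
    rw [tendsto_nhds]
    intro U hU hxU
    have hfin := hx U hU hxU
    obtain ⟨n₀, hn₀⟩ := (hM.diff hfin).nonempty
    have hn₀M : n₀ ∈ M := hn₀.1
    have hn₀fin : {m ∈ M | n₀ < m ∧ u m ∉ U}.Finite := by
      by_contra hc
      exact hn₀.2 ⟨hn₀M, hc⟩
    have hMU : {m ∈ M | u m ∉ U}.Finite := by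
      refine ((Set.finite_Iic n₀).union hn₀fin).subset ?_
      rintro m ⟨hmM, hmU⟩
      rcases le_or_gt m n₀ with hle | hlt'
      · exact Or.inl hle
      · exact Or.inr ⟨hmM, hlt', hmU⟩
    have hpre : {k : ℕ | u (e k) ∉ U}.Finite := by
      refine (hMU.preimage he.injective.injOn).subset ?_
      intro k hk
      exact ⟨hrange ▸ Set.mem_range_self k, hk⟩
    rw [← Nat.cofinite_eq_atTop]
    exact Filter.eventually_cofinite.mpr hpre
end

section
/- Every sequentially compact topological space X is 2-countably compact: for every double sequence f in X there exist a free ultrafilter p on ℕ and a point x ∈ X such that x is the p²-limit of f. -/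
open Filter Topology

section Aux

variable {X : Type*} [TopologicalSpace X] [SeqCompactSpace X]

/-- Choose a convergent subsequence: limit and extraction. -/
noncomputable def pick (g : ℕ → X) : X × (ℕ → ℕ) :=
  ⟨(SeqCompactSpace.tendsto_subseq g).choose,
   (SeqCompactSpace.tendsto_subseq g).choose_spec.choose⟩

lemma pick_strictMono (g : ℕ → X) : StrictMono (pick g).2 :=
  (SeqCompactSpace.tendsto_subseq g).choose_spec.choose_spec.1

lemma pick_tendsto (g : ℕ → X) : Tendsto (g ∘ (pick g).2) atTop (𝓝 (pick g).1) :=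
  (SeqCompactSpace.tendsto_subseq g).choose_spec.choose_spec.2

/-- Iterated extractions for the diagonal argument. -/
noncomputable def Phi (f : ℕ → ℕ → X) : ℕ → (ℕ → ℕ)
  | 0 => id
  | (i + 1) => Phi f i ∘ (pick (fun j => f (Phi f i i) (Phi f i j))).2

/-- The limit extracted at step `i`. -/
noncomputable def xseq (f : ℕ → ℕ → X) (i : ℕ) : X :=
  (pick (fun j => f (Phi f i i) (Phi f i j))).1

lemma Phi_strictMono (f : ℕ → ℕ → X) : ∀ i, StrictMono (Phi f i)
  | 0 => strictMono_id
  | (i + 1) => (Phi_strictMono f i).comp (pick_strictMono _)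

/-- The diagonal sequence. -/
noncomputable def diag (f : ℕ → ℕ → X) (i : ℕ) : ℕ := Phi f i i

lemma diag_strictMono (f : ℕ → ℕ → X) : StrictMono (diag f) := by
  apply strictMono_nat_of_lt_succ
  intro i
  have h1 : (i : ℕ) < (pick (fun j => f (Phi f i i) (Phi f i j))).2 (i + 1) :=
    lt_of_lt_of_le (Nat.lt_succ_self i) ((pick_strictMono _).le_apply)
  exact (Phi_strictMono f i) h1

lemma Phi_reach (f : ℕ → ℕ → X) (i : ℕ) :
    ∀ j, i ≤ j → ∀ n, ∃ e, Phi f j n = Phi f i e := by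
  intro j hij
  induction j, hij using Nat.le_induction with
  | base => exact fun n => ⟨n, rfl⟩
  | succ j hij ih =>
    intro n
    exact ih ((pick (fun k => f (Phi f j j) (Phi f j k))).2 n)

lemma conv (f : ℕ → ℕ → X) (i : ℕ) {U : Set X} (hU : IsOpen U) (hxU : xseq f i ∈ U) :
    ∀ᶠ j in atTop, f (diag f i) (diag f j) ∈ U := by
  have ht : Tendsto (fun j => f (diag f i) (Phi f (i + 1) j)) atTop (𝓝 (xseq f i)) :=
    pick_tendsto (fun j => f (Phi f i i) (Phi f i j))
  have hev : ∀ᶠ j in atTop, f (diag f i) (Phi f (i + 1) j) ∈ U :=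
    ht (hU.mem_nhds hxU)
  rw [eventually_atTop] at hev ⊢
  obtain ⟨N, hN⟩ := hev
  refine ⟨max (i + 1) (Phi f (i + 1) N), fun j hj => ?_⟩
  obtain ⟨e, he⟩ := Phi_reach f (i + 1) j (le_trans (le_max_left _ _) hj) j
  have hje : Phi f (i + 1) N ≤ Phi f (i + 1) e := by
    rw [← he]
    exact le_trans (le_trans (le_max_right _ _) hj) (diag_strictMono f).le_apply
  have hNe : N ≤ e := (Phi_strictMono f (i + 1)).le_iff_le.mp hje
  have := hN e hNe
  rwa [show Phi f (i+1) e = diag f j from he.symm] at this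

end Aux

/-- Every sequentially compact space is 2-countably compact. -/
theorem seqCompact_two_countably_compact {X : Type*} [TopologicalSpace X]
    [SeqCompactSpace X] (f : ℕ → ℕ → X) :
    ∃ p : Ultrafilter ℕ, IsFree p ∧ ∃ x : X, IsP2Limit p f x := by
  obtain ⟨x, ψ, hψ, hx⟩ := SeqCompactSpace.tendsto_subseq (xseq f)
  set s : ℕ → ℕ := fun t => diag f (ψ t) with hs
  have hsmono : StrictMono s := (diag_strictMono f).comp hψ
  set u : Ultrafilter ℕ := hyperfilter ℕ with hu
  have hufree : ∀ A : Set ℕ, A.Finite → A ∉ u := fun A hA => Filter.notMem_hyperfilter_of_finite hA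
  have hucof : ∀ A : Set ℕ, Aᶜ.Finite → A ∈ u := by
    intro A hA
    rw [← Ultrafilter.compl_notMem_iff]
    exact hufree _ hA
  set p : Ultrafilter ℕ := u.map s with hp
  have hmem : ∀ A : Set ℕ, A ∈ p ↔ s ⁻¹' A ∈ u := fun A => Iff.rfl
  refine ⟨p, ?_, x, ?_⟩
  · intro A hA hAp
    rw [hmem] at hAp
    exact hufree _ (hA.preimage (hsmono.injective.injOn)) hAp
  · intro U hU hxU
    have key : {n | {m | n < m ∧ f n m ∈ U} ∈ p} ∈ p := by
      rw [hmem]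
      have hev : ∀ᶠ t in atTop, xseq f (ψ t) ∈ U := (hx (hU.mem_nhds hxU))
      rw [eventually_atTop] at hev
      obtain ⟨T, hT⟩ := hev
      apply Filter.mem_of_superset (hucof {t | T ≤ t} ((Set.finite_Iio T).subset ?_))
      · intro t ht
        simp only [Set.mem_setOf_eq] at ht
        show {m | s t < m ∧ f (s t) m ∈ U} ∈ p
        rw [hmem]
        have hconv := conv f (ψ t) hU (hT t ht)
        rw [eventually_atTop] at hconv
        obtain ⟨J, hJ⟩ := hconv
        apply Filter.mem_of_superset (hucof {r | max (t + 1) J ≤ r}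
          ((Set.finite_Iio (max (t + 1) J)).subset ?_))
        · intro r hr
          simp only [Set.mem_setOf_eq] at hr
          refine ⟨hsmono (lt_of_lt_of_le (Nat.lt_succ_self t) (le_trans (le_max_left _ _) hr)), ?_⟩
          exact hJ (ψ r) (le_trans (le_trans (le_max_right _ _) hr) hψ.le_apply)
        · intro r hr
          simp only [Set.mem_compl_iff, Set.mem_setOf_eq, not_le] at hr
          exact hr
      · intro t ht
        simp only [Set.mem_compl_iff, Set.mem_setOf_eq, not_le] at ht
        exact ht
    -- unfold fubini membership
    show {z : ℕ × ℕ | z.1 < z.2 ∧ f z.1 z.2 ∈ U} ∈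
      Filter.bind ↑p (fun n => ((Ultrafilter.map (fun m => (n, m)) p : Ultrafilter (ℕ × ℕ)) : Filter (ℕ × ℕ)))
    rw [Filter.mem_bind']
    refine Filter.mem_of_superset key ?_
    intro n hn
    simp only [Set.mem_setOf_eq, Ultrafilter.mem_coe, Ultrafilter.mem_map] at hn ⊢
    exact Filter.mem_of_superset hn fun m hm => hm
end

section
/- A topological space X is countably compact if and only if every double sequence f in X has a 2-limit point. -/
/-- A topological space is countably compact if every sequence has a cluster point:
a point `x` such that every open neighborhood of `x` contains infinitely many terms. -/
def CountablyCompact (X : Type*) [TopologicalSpace X] : Prop :=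
  ∀ u : ℕ → X, ∃ x : X, ∀ U : Set X, IsOpen U → x ∈ U → {n : ℕ | u n ∈ U}.Infinite

/-- A space is countably compact iff every double sequence has a 2-limit point. -/
theorem countablyCompact_iff_two_limit_point {X : Type*} [TopologicalSpace X] :
    CountablyCompact X ↔ ∀ f : ℕ → ℕ → X, ∃ x : X, Is2LimitPoint f x := by
  constructor
  · intro hcc f
    choose x hx using fun n => hcc (f n)
    obtain ⟨y, hy⟩ := hcc x
    refine ⟨y, fun U hU hyU hmem => ?_⟩
    obtain ⟨-, hfin⟩ := hmem
    have hsub : {n | x n ∈ U} ⊆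
        {n : ℕ | ¬ {m : ℕ | (n, m) ∈ {z : ℕ × ℕ | z.1 < z.2 ∧ f z.1 z.2 ∈ U}}.Finite} := by
      intro n hn
      have hinf : {m | f n m ∈ U}.Infinite := hx n U hU hn
      have : ({m | f n m ∈ U} \ Set.Iic n).Infinite :=
        hinf.diff (Set.finite_Iic n)
      refine fun hfin' => this (hfin'.subset ?_)
      intro m hm
      exact ⟨not_le.mp fun h => hm.2 h, hm.1⟩
    exact (hy U hU hyU).mono hsub hfin
  · intro h u
    obtain ⟨x, hx⟩ := h (fun _ m => u m)
    refine ⟨x, fun U hU hxU => ?_⟩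
    by_contra hfin
    rw [Set.not_infinite] at hfin
    apply hx U hU hxU
    refine ⟨fun z hz => hz.1, ?_⟩
    have : {n : ℕ | ¬ {m : ℕ | (n, m) ∈
        {z : ℕ × ℕ | z.1 < z.2 ∧ u z.2 ∈ U}}.Finite} = ∅ := by
      ext n
      simp only [Set.mem_setOf_eq, Set.mem_empty_iff_false, iff_false, not_not]
      exact hfin.subset fun m hm => hm.2
    rw [this]
    exact Set.finite_empty
end

section
/- If a topological space X is 2-countably compact then X is weakly 2-countably compact, and if X is weakly 2-countably compact then X is countably compact. -/
/-- Key combinatorial lemma: given an ultrafilter all of whose members are infinite,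
a set `B ∈ p` and sets `A n ∈ p` for `n ∈ B`, we can find a strictly increasing
sequence `g` with `g j ∈ A (g i)` for `i < j`. -/
lemma exists_diag_seq {p : Ultrafilter ℕ} (hp : ∀ S ∈ p, S.Infinite) (A : ℕ → Set ℕ)
    (B : Set ℕ) (hB : B ∈ p) (hAB : ∀ n ∈ B, A n ∈ p) :
    ∃ g : ℕ → ℕ, StrictMono g ∧ ∀ i j, i < j → g j ∈ A (g i) := by
  classical
  have hstep : ∀ s : {s : ℕ × Set ℕ // s.2 ∈ p ∧ s.2 ⊆ B},
      ∃ t : {s : ℕ × Set ℕ // s.2 ∈ p ∧ s.2 ⊆ B},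
        t.1.1 ∈ s.1.2 ∧ s.1.1 < t.1.1 ∧ t.1.2 ⊆ s.1.2 ∧ t.1.2 ⊆ A t.1.1 := by
    rintro ⟨⟨n, C⟩, hC, hCB⟩
    obtain ⟨m, hmC, hmn⟩ := (hp C hC).exists_gt n
    exact ⟨⟨(m, C ∩ A m), Filter.inter_mem hC (hAB m (hCB hmC)), fun x hx => hCB hx.1⟩,
      hmC, hmn, fun x hx => hx.1, fun x hx => hx.2⟩
  choose step h1 h2 h3 h4 using hstep
  obtain ⟨n0, hn0⟩ := (hp B hB).nonempty
  set s0 : {s : ℕ × Set ℕ // s.2 ∈ p ∧ s.2 ⊆ B} :=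
    ⟨(n0, B ∩ A n0), Filter.inter_mem hB (hAB n0 hn0), fun x hx => hx.1⟩ with hs0
  set seq : ℕ → {s : ℕ × Set ℕ // s.2 ∈ p ∧ s.2 ⊆ B} := fun k => step^[k] s0 with hseq
  have hsucc : ∀ k, seq (k + 1) = step (seq k) := by
    intro k
    simp [hseq, Function.iterate_succ_apply']
  set g : ℕ → ℕ := fun k => (seq k).1.1 with hg
  set C : ℕ → Set ℕ := fun k => (seq k).1.2 with hgC
  have hmem : ∀ k, g (k + 1) ∈ C k := fun k => by
    rw [hg, hgC]; simp only [hsucc k]; exact h1 (seq k)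
  have hlt : ∀ k, g k < g (k + 1) := fun k => by
    rw [hg]; simp only [hsucc k]; exact h2 (seq k)
  have hsub : ∀ k, C (k + 1) ⊆ C k := fun k => by
    rw [hgC]; simp only [hsucc k]; exact h3 (seq k)
  have hCA : ∀ k, C k ⊆ A (g k) := by
    intro k
    cases k with
    | zero => rw [hgC, hg]; simp only [hseq, Function.iterate_zero, id, hs0]
              exact fun x hx => hx.2
    | succ k => rw [hgC, hg]; simp only [hsucc k]; exact h4 (seq k)
  have hmono : StrictMono g := strictMono_nat_of_lt_succ hlt
  have hanti : Antitone C := antitone_nat_of_succ_le (fun k => hsub k)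
  refine ⟨g, hmono, ?_⟩
  intro i j hij
  obtain ⟨k, rfl⟩ := Nat.exists_eq_succ_of_ne_zero (by omega : j ≠ 0)
  have hik : i ≤ k := Nat.lt_succ_iff.mp hij
  exact hCA i (hanti hik (hmem k))

/-- 2-countably compact implies weakly 2-countably compact implies countably compact. -/
theorem two_cc_implies_weak_two_cc_implies_cc {X : Type*} [TopologicalSpace X] :
    ((∀ f : ℕ → ℕ → X, ∃ p : Ultrafilter ℕ, IsFree p ∧ ∃ x : X, IsP2Limit p f x) →
      ∀ f : ℕ → ℕ → X, ∃ x : X, Is2AccPoint f x) ∧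
    ((∀ f : ℕ → ℕ → X, ∃ x : X, Is2AccPoint f x) → CountablyCompact X) := by
  constructor
  · intro h2cc f
    obtain ⟨p, hpfree, x, hx⟩ := h2cc f
    have hp : ∀ S ∈ p, S.Infinite := by
      intro S hS
      by_contra hfin
      exact hpfree S (Set.not_infinite.mp hfin) hS
    refine ⟨x, ?_⟩
    intro U hU hxU
    have hA := hx U hU hxU
    set A : ℕ → Set ℕ := fun n => {m | n < m ∧ f n m ∈ U} with hAdef
    set B : Set ℕ := {n | A n ∈ p} with hBdef
    have hB : B ∈ p := by
      rw [fubini] at hA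
      exact hA
    obtain ⟨g, hgmono, hgA⟩ := exists_diag_seq hp A B hB (fun n hn => hn)
    refine ⟨Set.range g, Set.infinite_range_of_injective hgmono.injective, ?_⟩
    rintro n ⟨i, rfl⟩ m ⟨j, rfl⟩ hnm
    have hij : i < j := hgmono.lt_iff_lt.mp hnm
    exact (hgA i j hij).2
  · intro hw u
    obtain ⟨x, hx⟩ := hw (fun n _ => u n)
    refine ⟨x, ?_⟩
    intro U hU hxU
    obtain ⟨M, hM, hMf⟩ := hx U hU hxU
    refine hM.mono ?_
    intro n hn
    obtain ⟨m, hmM, hnm⟩ := hM.exists_gt n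
    exact hMf n hn m hmM hnm
end

section
/- Let Z be the subspace of Ultrafilter(ℕ×ℕ) (with the Stone topology) consisting of all ultrafilters on ℕ×ℕ that are not of the form p⊗p for any free ultrafilter p on ℕ. Then: (a) Z is countably compact, i.e., every sequence in Z has a cluster point in Z; and (b) Z is not 2-countably compact: the double sequence f(n,m) = pure(n,m) (the principal ultrafilter at (n,m) ∈ ℕ×ℕ), defined for n < m, has no p²-limit in Z for any free ultrafilter p on ℕ. -/
/-- The subspace of `Ultrafilter (ℕ × ℕ)` consisting of non-Fubini ultrafilters. -/
def Z : Set (Ultrafilter (ℕ × ℕ)) :=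
  {q | ¬ ∃ p : Ultrafilter ℕ, IsFree p ∧ q = fubini p p}

namespace NFCC

open Set Filter

lemma mem_ubind {α β : Type*} {f : Ultrafilter α} {m : α → Ultrafilter β} {s : Set β} :
    s ∈ f.bind m ↔ {a | s ∈ m a} ∈ f := Filter.mem_bind'

lemma uf_eq_of_subset {α : Type*} {x y : Ultrafilter α} (h : ∀ s ∈ x, s ∈ y) : x = y :=
  (Ultrafilter.eq_of_le (fun s hs => h s hs)).symm

lemma mem_fubini {p q : Ultrafilter ℕ} {A : Set (ℕ × ℕ)} :
    A ∈ fubini p q ↔ {n | {m | (n, m) ∈ A} ∈ q} ∈ p := by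
  rw [fubini, mem_ubind]
  exact Iff.rfl

lemma mapFst_fubini (p q : Ultrafilter ℕ) : (fubini p q).map Prod.fst = p := by
  refine (uf_eq_of_subset fun s hs => ?_).symm
  rw [Ultrafilter.mem_map, show (Prod.fst ⁻¹' s : Set (ℕ × ℕ)) = {z | z.1 ∈ s} from rfl,
    mem_fubini]
  exact Filter.mem_of_superset hs fun n hn =>
    Filter.mem_of_superset Filter.univ_mem fun m _ => hn

lemma map_ubind {α β : Type*} (f : α → β) (q : Ultrafilter ℕ) (v : ℕ → Ultrafilter α) :
    (q.bind v).map f = q.bind fun j => (v j).map f := by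
  refine uf_eq_of_subset fun s hs => ?_
  rw [Ultrafilter.mem_map, mem_ubind] at hs
  rw [mem_ubind]
  exact Filter.mem_of_superset hs fun j hj => Ultrafilter.mem_map.2 hj

lemma isFree_hyper : IsFree (hyperfilter ℕ) := fun _ hA => Set.Finite.notMem_hyperfilter hA

lemma infinite_of_mem_free {p : Ultrafilter ℕ} (hp : IsFree p) {T : Set ℕ} (hT : T ∈ p) :
    T.Infinite := by
  by_contra h
  exact hp T (Set.not_infinite.mp h) hT

lemma isFree_map {f : ℕ → ℕ} (hf : Function.Injective f) {p : Ultrafilter ℕ}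
    (hp : IsFree p) : IsFree (p.map f) := fun A hA hmem =>
  hp _ (hA.preimage hf.injOn) (Ultrafilter.mem_map.mp hmem)

/-! ### Disjointification -/

structure DState (α : Type) (x : ℕ → Ultrafilter α) where
  I : Set ℕ
  C : Set α
  hI : I.Infinite
  hC : ∀ i ∈ I, C ∈ x i

structure DStep (α : Type) (x : ℕ → Ultrafilter α) (s : DState α x) where
  k : ℕ
  A : Set α
  next : DState α x
  hk : k ∈ s.I
  hA : A ∈ x k
  hAC : A ⊆ s.C
  hsub : next.I ⊆ s.I
  hknot : k ∉ next.I
  hCsub : next.C ⊆ s.C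
  hdisj : ∀ a ∈ A, a ∉ next.C

lemma dstep_exists {α : Type} {x : ℕ → Ultrafilter α} (hx : Function.Injective x)
    (s : DState α x) : Nonempty (DStep α x s) := by
  obtain ⟨k₁, hk₁, k₂, hk₂, hne⟩ := s.hI.nontrivial
  have hxne : x k₁ ≠ x k₂ := fun h => hne (hx h)
  obtain ⟨B, hB1, hB2⟩ : ∃ B, B ∈ x k₁ ∧ B ∉ x k₂ := by
    by_contra h
    push_neg at h
    exact hxne (uf_eq_of_subset h)
  by_cases hP : {i ∈ s.I | B ∈ x i}.Infinite
  · refine ⟨⟨k₂, s.C ∩ Bᶜ, ⟨{i ∈ s.I | B ∈ x i}, s.C ∩ B, hP,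
      fun i hi => Filter.inter_mem (s.hC i hi.1) hi.2⟩,
      hk₂, Filter.inter_mem (s.hC _ hk₂) (Ultrafilter.compl_mem_iff_notMem.2 hB2),
      Set.inter_subset_left, fun i hi => hi.1, fun h => hB2 h.2,
      Set.inter_subset_left, fun a ha hc => ha.2 hc.2⟩⟩
  · have hP2 : {i ∈ s.I | B ∉ x i}.Infinite := by
      have hsub : s.I ⊆ {i ∈ s.I | B ∈ x i} ∪ {i ∈ s.I | B ∉ x i} := by
        intro i hi
        by_cases h : B ∈ x i
        · exact Or.inl ⟨hi, h⟩
        · exact Or.inr ⟨hi, h⟩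
      rcases Set.infinite_union.mp (s.hI.mono hsub) with h | h
      · exact absurd h hP
      · exact h
    refine ⟨⟨k₁, s.C ∩ B, ⟨{i ∈ s.I | B ∉ x i}, s.C ∩ Bᶜ, hP2,
      fun i hi => Filter.inter_mem (s.hC i hi.1) (Ultrafilter.compl_mem_iff_notMem.2 hi.2)⟩,
      hk₁, Filter.inter_mem (s.hC _ hk₁) hB1,
      Set.inter_subset_left, fun i hi => hi.1, fun h => h.2 hB1,
      Set.inter_subset_left, fun a ha hc => hc.2 ha.2⟩⟩

noncomputable def dstep {α : Type} {x : ℕ → Ultrafilter α} (hx : Function.Injective x)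
    (s : DState α x) : DStep α x s := (dstep_exists hx s).some

noncomputable def dchain {α : Type} {x : ℕ → Ultrafilter α} (hx : Function.Injective x) :
    ℕ → DState α x
  | 0 => ⟨Set.univ, Set.univ, Set.infinite_univ, fun _ _ => Filter.univ_mem⟩
  | j + 1 => (dstep hx (dchain hx j)).next

lemma dchain_anti {α : Type} {x : ℕ → Ultrafilter α} (hx : Function.Injective x) :
    ∀ i j, i ≤ j → (dchain hx j).I ⊆ (dchain hx i).I ∧ (dchain hx j).C ⊆ (dchain hx i).C := by
  intro i j hij
  induction j with
  | zero =>
    obtain rfl : i = 0 := Nat.le_zero.mp hij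
    exact ⟨subset_rfl, subset_rfl⟩
  | succ j ih =>
    by_cases h : i ≤ j
    · have := ih h
      exact ⟨((dstep hx (dchain hx j)).hsub).trans this.1,
             ((dstep hx (dchain hx j)).hCsub).trans this.2⟩
    · obtain rfl : i = j + 1 := Nat.le_antisymm hij (by omega)
      exact ⟨subset_rfl, subset_rfl⟩

lemma disjointify {α : Type} (x : ℕ → Ultrafilter α) (hx : Function.Injective x) :
    ∃ (g : ℕ → ℕ) (A : ℕ → Set α), Function.Injective g ∧ (∀ j, A j ∈ x (g j)) ∧
      ∀ i j, i ≠ j → ∀ a ∈ A i, a ∉ A j := by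
  refine ⟨fun j => (dstep hx (dchain hx j)).k, fun j => (dstep hx (dchain hx j)).A, ?_, ?_, ?_⟩
  · intro i j hij
    by_contra hne
    rcases Nat.lt_or_ge i j with h | h
    · have h1 : (dstep hx (dchain hx j)).k ∈ (dchain hx j).I := (dstep hx (dchain hx j)).hk
      have h2 : (dchain hx j).I ⊆ (dchain hx (i + 1)).I := (dchain_anti hx (i + 1) j h).1
      have h3 : (dstep hx (dchain hx i)).k ∉ (dchain hx (i + 1)).I :=
        (dstep hx (dchain hx i)).hknot
      have hij' : (dstep hx (dchain hx i)).k = (dstep hx (dchain hx j)).k := hij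
      exact h3 (hij' ▸ h2 h1)
    · rcases Nat.lt_or_ge j i with h' | h'
      · have h1 : (dstep hx (dchain hx i)).k ∈ (dchain hx i).I := (dstep hx (dchain hx i)).hk
        have h2 : (dchain hx i).I ⊆ (dchain hx (j + 1)).I := (dchain_anti hx (j + 1) i h').1
        have h3 : (dstep hx (dchain hx j)).k ∉ (dchain hx (j + 1)).I :=
          (dstep hx (dchain hx j)).hknot
        have hij' : (dstep hx (dchain hx i)).k = (dstep hx (dchain hx j)).k := hij
        exact h3 (hij'.symm ▸ h2 h1)
      · exact hne (Nat.le_antisymm h' h)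
  · exact fun j => (dstep hx (dchain hx j)).hA
  · have key : ∀ i j, i < j → ∀ a ∈ (dstep hx (dchain hx i)).A,
        a ∉ (dstep hx (dchain hx j)).A := by
      intro i j hij a hai haj
      have h1 : (dstep hx (dchain hx j)).A ⊆ (dchain hx j).C := (dstep hx (dchain hx j)).hAC
      have h2 : (dchain hx j).C ⊆ (dchain hx (i + 1)).C := (dchain_anti hx (i + 1) j hij).2
      exact (dstep hx (dchain hx i)).hdisj a hai (h2 (h1 haj))
    intro i j hij a hai haj
    rcases Nat.lt_or_ge i j with h | h
    · exact key i j h a hai haj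
    · exact key j i (Nat.lt_of_le_of_ne h (Ne.symm hij)) a haj hai

lemma exists_injective_subseq {β : Type*} (u : ℕ → β) (h : ∀ y, {n | u n = y}.Finite) :
    ∃ g : ℕ → ℕ, Function.Injective (u ∘ g) := by
  have hr : (Set.range u).Infinite := by
    intro hfin
    have h2 : (Set.univ : Set ℕ).Finite := by
      have hsub : (Set.univ : Set ℕ) ⊆ ⋃ y ∈ Set.range u, {n | u n = y} := fun n _ =>
        Set.mem_biUnion ⟨n, rfl⟩ rfl
      exact (hfin.biUnion fun y _ => h y).subset hsub
    exact Set.infinite_univ h2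
  set emb := Set.Infinite.natEmbedding _ hr with hemb
  choose g hg using fun n => (emb n).2
  refine ⟨g, fun a b hab => emb.injective (Subtype.ext ?_)⟩
  rw [← hg a, ← hg b]
  exact hab

/-! ### Cluster point lemmas -/

lemma basic_nbhd {U : Set (Ultrafilter (ℕ × ℕ))} (hU : IsOpen U)
    {v : Ultrafilter (ℕ × ℕ)} (hv : v ∈ U) :
    ∃ B : Set (ℕ × ℕ), B ∈ v ∧ {w : Ultrafilter (ℕ × ℕ) | B ∈ w} ⊆ U := by
  obtain ⟨S, hS, hvS, hSU⟩ := ultrafilterBasis_is_basis.exists_subset_of_mem_open hv hU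
  obtain ⟨B, rfl⟩ := hS
  exact ⟨B, hvS, hSU⟩

lemma cluster_bind (u : ℕ → Ultrafilter (ℕ × ℕ)) {G : ℕ → ℕ} (hG : Function.Injective G)
    {q : Ultrafilter ℕ} (hq : IsFree q) :
    ∀ U, IsOpen U → q.bind (fun j => u (G j)) ∈ U → {n | u n ∈ U}.Infinite := by
  intro U hU hvU
  obtain ⟨B, hBv, hBU⟩ := basic_nbhd hU hvU
  have hT : {j | B ∈ u (G j)} ∈ q := mem_ubind.mp hBv
  have hTinf := infinite_of_mem_free hq hT
  have himg : G '' {j | B ∈ u (G j)} ⊆ {n | u n ∈ U} := by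
    rintro n ⟨j, hj, rfl⟩
    exact hBU hj
  exact Set.Infinite.mono himg (hTinf.image hG.injOn)

lemma cluster_of_clusters (u : ℕ → Ultrafilter (ℕ × ℕ)) (v : ℕ → Ultrafilter (ℕ × ℕ))
    (hv : ∀ j, ∀ U, IsOpen U → v j ∈ U → {n | u n ∈ U}.Infinite) (e : Ultrafilter ℕ) :
    ∀ U, IsOpen U → e.bind v ∈ U → {n | u n ∈ U}.Infinite := by
  intro U hU hVU
  obtain ⟨B, hBv, hBU⟩ := basic_nbhd hU hVU
  obtain ⟨j, hj⟩ := Ultrafilter.nonempty_of_mem (mem_ubind.mp hBv)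
  exact hv j U hU (hBU hj)

/-! ### Part (a) -/

theorem partA : ∀ u : ℕ → Ultrafilter (ℕ × ℕ), (∀ n, u n ∈ Z) →
    ∃ x ∈ Z, ∀ U : Set (Ultrafilter (ℕ × ℕ)), IsOpen U → x ∈ U →
      {n : ℕ | u n ∈ U}.Infinite := by
  intro u hu
  by_contra hcon
  push_neg at hcon
  have H : ∀ x : Ultrafilter (ℕ × ℕ),
      (∀ U, IsOpen U → x ∈ U → {n | u n ∈ U}.Infinite) →
      ∃ p, IsFree p ∧ x = fubini p p := by
    intro x hx
    by_contra hnp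
    obtain ⟨U, h1, h2, h3⟩ := hcon x hnp
    exact (hx U h1 h2) h3
  -- all fibers of u are finite
  have hfib : ∀ y, {n | u n = y}.Finite := by
    intro y
    by_contra hin
    have hin : {n | u n = y}.Infinite := hin
    have hy : ∀ U, IsOpen U → y ∈ U → {n | u n ∈ U}.Infinite := fun U _ hyU =>
      Set.Infinite.mono (fun n hn => by rw [Set.mem_setOf_eq, hn]; exact hyU) hin
    obtain ⟨p, hp, hyp⟩ := H y hy
    obtain ⟨n, hn⟩ := hin.nonempty
    exact (hu n) ⟨p, hp, by rw [show u n = y from hn, hyp]⟩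
  obtain ⟨g₀, hg₀⟩ := exists_injective_subseq u hfib
  obtain ⟨g₁, A, hg₁, hA, hAdisj⟩ := disjointify (u ∘ g₀) hg₀
  set G : ℕ → ℕ := fun j => g₀ (g₁ j) with hGdef
  have hGinj : Function.Injective G := fun a b h => hg₁ (hg₀ (by simpa using congrArg u h))
  set x : ℕ → Ultrafilter (ℕ × ℕ) := fun j => u (G j) with hxdef
  have hAx : ∀ j, A j ∈ x j := hA
  have e := hyperfilter ℕ
  have he : IsFree (hyperfilter ℕ) := isFree_hyper
  -- countably many distinct free ultrafilters
  set q : ℕ → Ultrafilter ℕ := fun n => (hyperfilter ℕ).map (Nat.pair n) with hqdef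
  have hqfree : ∀ n, IsFree (q n) := fun n =>
    isFree_map (fun a b hab => (Nat.pair_eq_pair.mp hab).2) he
  have hqrange : ∀ n, Set.range (Nat.pair n) ∈ q n := fun n =>
    Ultrafilter.mem_map.mpr (by
      refine Filter.mem_of_superset Filter.univ_mem ?_
      intro m _
      exact ⟨m, rfl⟩)
  have hqd : ∀ n n', n ≠ n' → Set.range (Nat.pair n) ∉ q n' := by
    intro n n' hne hmem
    obtain ⟨z, hz1, hz2⟩ := Ultrafilter.nonempty_of_mem (Filter.inter_mem hmem (hqrange n'))
    obtain ⟨m, hm⟩ := hz1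
    obtain ⟨m', hm'⟩ := hz2
    exact hne (Nat.pair_eq_pair.mp (hm.trans hm'.symm)).1
  set v : ℕ → Ultrafilter (ℕ × ℕ) := fun n => (q n).bind x with hvdef
  have hvCl : ∀ n, ∀ U, IsOpen U → v n ∈ U → {m | u m ∈ U}.Infinite := fun n =>
    cluster_bind u hGinj (hqfree n)
  have hvfub : ∀ n, ∃ p, IsFree p ∧ v n = fubini p p := fun n => H _ (hvCl n)
  choose p hpfree hpv using hvfub
  have hBSmem : ∀ (S : Set ℕ) (n : ℕ), S ∈ q n → (⋃ j ∈ S, A j) ∈ v n := by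
    intro S n hS
    refine mem_ubind.mpr (Filter.mem_of_superset hS fun j hj => ?_)
    exact Filter.mem_of_superset (hAx j) (Set.subset_biUnion_of_mem hj)
  have hBSnot : ∀ (S : Set ℕ) (n : ℕ), S ∉ q n → (⋃ j ∈ S, A j) ∉ v n := by
    intro S n hS hmem
    have hsub : {j | (⋃ j' ∈ S, A j') ∈ x j} ⊆ S := by
      intro j hj
      by_contra hjS
      have hdisj : (⋃ j' ∈ S, A j') ∩ A j = ∅ := by
        ext a
        simp only [Set.mem_inter_iff, Set.mem_iUnion, Set.mem_empty_iff_false, iff_false,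
          not_and, exists_prop]
        rintro ⟨j', hj', ha⟩ haj
        exact hAdisj j' j (fun hh => hjS (hh ▸ hj')) a ha haj
      have : (⋃ j' ∈ S, A j') ∩ A j ∈ x j := Filter.inter_mem hj (hAx j)
      rw [hdisj] at this
      exact Ultrafilter.empty_notMem this
    exact hS (Filter.mem_of_superset (mem_ubind.mp hmem) hsub)
  have hvinj : Function.Injective v := by
    intro n n' hnn
    by_contra hne
    have h1 : (⋃ j ∈ Set.range (Nat.pair n), A j) ∈ v n := hBSmem _ n (hqrange n)
    have h2 : (⋃ j ∈ Set.range (Nat.pair n), A j) ∉ v n' := hBSnot _ n' (hqd n n' hne)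
    exact h2 (hnn ▸ h1)
  have hpinj : Function.Injective p := by
    intro n n' hnn
    exact hvinj (by rw [hpv n, hpv n', hnn])
  obtain ⟨h2, C, hh2, hC, hCdisj⟩ := disjointify p hpinj
  set P : ℕ → Ultrafilter ℕ := fun j => p (h2 j) with hPdef
  have hCP : ∀ j, C j ∈ P j := hC
  set Astar : Set (ℕ × ℕ) := {z | ∃ i j, i < j ∧ z.1 ∈ C i ∧ z.2 ∈ C j} with hAstar
  -- F1 : Astar is in no fubini (P j) (P j)
  have hF1 : ∀ j, Astar ∉ fubini (P j) (P j) := by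
    intro j hj
    rw [mem_fubini] at hj
    have hsubj : {n | {m | (n, m) ∈ Astar} ∈ P j} ⊆ (C j)ᶜ := by
      intro a ha haC
      have hsec : {m | (a, m) ∈ Astar} ∩ C j = ∅ := by
        ext m
        simp only [Set.mem_inter_iff, Set.mem_empty_iff_false, iff_false, not_and]
        rintro ⟨i, i', hii', hai, hmi'⟩ hmj
        have hieq : h2 i = h2 j → i = j := fun hh => hh2 hh
        have hi : i = j := by
          by_contra hij
          exact hCdisj i j hij a hai haC
        have hi' : i' = j := by
          by_contra hij
          exact hCdisj i' j hij m hmi' hmj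
        omega
      have : {m | (a, m) ∈ Astar} ∩ C j ∈ P j := Filter.inter_mem ha (hCP j)
      rw [hsec] at this
      exact Ultrafilter.empty_notMem this
    have : (C j)ᶜ ∈ P j := Filter.mem_of_superset hj hsubj
    exact (Ultrafilter.compl_mem_iff_notMem.mp this) (hCP j)
  -- r and F2
  set r : Ultrafilter ℕ := (hyperfilter ℕ).bind P with hrdef
  have hUC : (⋃ i, C i) ∈ r := by
    refine mem_ubind.mpr (Filter.mem_of_superset Filter.univ_mem ?_)
    intro j _
    exact Filter.mem_of_superset (hCP j) (Set.subset_iUnion C j)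
  have hF2 : Astar ∈ fubini r r := by
    rw [mem_fubini]
    refine Filter.mem_of_superset hUC ?_
    rintro a ⟨_, ⟨i, rfl⟩, hai⟩
    show {m | (a, m) ∈ Astar} ∈ r
    refine mem_ubind.mpr ?_
    have hgt : {j | i < j} ∈ hyperfilter ℕ := by
      apply mem_hyperfilter_of_finite_compl
      have : {j | i < j}ᶜ = {j | j ≤ i} := by ext j; simp [not_lt]
      rw [this]
      exact Set.finite_le_nat i
    refine Filter.mem_of_superset hgt ?_
    intro j hij
    exact Filter.mem_of_superset (hCP j) fun m hm => ⟨i, j, hij, hai, hm⟩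
  -- V and the contradiction
  set V : Ultrafilter (ℕ × ℕ) := (hyperfilter ℕ).bind (fun j => v (h2 j)) with hVdef
  have hVCl : ∀ U, IsOpen U → V ∈ U → {m | u m ∈ U}.Infinite :=
    cluster_of_clusters u (fun j => v (h2 j)) (fun j => hvCl (h2 j)) (hyperfilter ℕ)
  obtain ⟨s, hsfree, hVs⟩ := H V hVCl
  have hVr : V.map Prod.fst = r := by
    rw [hVdef, map_ubind]
    congr 1
    funext j
    rw [hpv (h2 j), mapFst_fubini]
  have hsr : s = r := by
    have : V.map Prod.fst = s := by rw [hVs, mapFst_fubini]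
    rw [← this, hVr]
  have hAV : Astar ∈ V := by
    rw [hVs, hsr]
    exact hF2
  obtain ⟨j, hj⟩ := Ultrafilter.nonempty_of_mem (mem_ubind.mp hAV)
  have : Astar ∈ fubini (P j) (P j) := by
    rw [← hpv (h2 j)]
    exact hj
  exact hF1 j this

/-! ### Part (b) -/

theorem partB : ∀ p : Ultrafilter ℕ, IsFree p → ∀ x ∈ Z,
    ¬ ∀ U : Set (Ultrafilter (ℕ × ℕ)), IsOpen U → x ∈ U →
      {z : ℕ × ℕ | z.1 < z.2 ∧ (pure z : Ultrafilter (ℕ × ℕ)) ∈ U} ∈ fubini p p := by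
  intro p hp x hx hlim
  refine hx ⟨p, hp, uf_eq_of_subset fun A hA => ?_⟩
  have hU := hlim {w | A ∈ w} (ultrafilter_isOpen_basic A) hA
  refine Filter.mem_of_superset hU ?_
  intro z hz
  exact Ultrafilter.mem_pure.mp hz.2

end NFCC

/-- `Z` is countably compact, but the double sequence `(n, m) ↦ pure (n, m)` has no
`p²`-limit in `Z` for any free ultrafilter `p`, so `Z` is not 2-countably compact. -/
theorem non_fubini_countably_compact_not_two_countably_compact :
    (∀ u : ℕ → Ultrafilter (ℕ × ℕ), (∀ n, u n ∈ Z) →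
      ∃ x ∈ Z, ∀ U : Set (Ultrafilter (ℕ × ℕ)), IsOpen U → x ∈ U →
        {n : ℕ | u n ∈ U}.Infinite) ∧
    (∀ p : Ultrafilter ℕ, IsFree p → ∀ x ∈ Z,
      ¬ ∀ U : Set (Ultrafilter (ℕ × ℕ)), IsOpen U → x ∈ U →
        {z : ℕ × ℕ | z.1 < z.2 ∧ (pure z : Ultrafilter (ℕ × ℕ)) ∈ U} ∈ fubini p p) :=
  ⟨NFCC.partA, NFCC.partB⟩
end

section
/- Let r be a Ramsey ultrafilter on ℕ and let (x_n)_{n∈ℕ} be a sequence in βω. Then there exists M ∈ r such that either (x_n)_{n∈M} is constant, or the map n ↦ x_n is injective on M and {x_n : n ∈ M} is a discrete subset of βω. -/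
/-- A free ultrafilter `u` on ℕ is Ramsey if for every partition `{P n : n ∈ ℕ}` of ℕ,
either some `P i ∈ u`, or there is `U ∈ u` meeting each `P n` in at most one point. -/
def IsRamsey (u : Ultrafilter ℕ) : Prop :=
  IsFree u ∧ ∀ P : ℕ → Set ℕ, (Pairwise fun i j => Disjoint (P i) (P j)) →
    (⋃ i, P i) = Set.univ →
    (∃ i, P i ∈ u) ∨ ∃ U ∈ u, ∀ n, (U ∩ P n).Subsingleton

/-- A subset `D` of a topological space is discrete if every point of `D` has an open
neighborhood meeting `D` only in that point. -/
def IsDiscreteSubset {Y : Type*} [TopologicalSpace Y] (D : Set Y) : Prop :=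
  ∀ d ∈ D, ∃ U : Set Y, IsOpen U ∧ U ∩ D = {d}

lemma fiber_pairwise (h : ℕ → ℕ) :
    Pairwise fun i j => Disjoint {m | h m = i} {m | h m = j} := by
  intro i j hij
  rw [Set.disjoint_left]
  rintro m (rfl : h m = i) (h2 : h m = j)
  exact hij h2

lemma fiber_cover (h : ℕ → ℕ) : (⋃ i, {m | h m = i}) = Set.univ := by
  ext m; simp

def seqA (G : ℕ → ℕ) : ℕ → ℕ
  | 0 => 0
  | k + 1 => G (seqA G k) + seqA G k + 1

@[simp] lemma seqA_succ (G : ℕ → ℕ) (k : ℕ) :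
    seqA G (k + 1) = G (seqA G k) + seqA G k + 1 := rfl

lemma ramsey_diag (r : Ultrafilter ℕ) (hr : IsRamsey r) (B : ℕ → Set ℕ)
    (hB : ∀ n, B n ∈ r) :
    ∃ M ∈ r, ∀ n ∈ M, ∀ m ∈ M, n < m → m ∈ B n := by
  classical
  set B' : ℕ → Set ℕ := fun n => (⋂ k ∈ Set.Iic n, B k) ∩ (Set.Iic n)ᶜ with hB'def
  have hB' : ∀ n, B' n ∈ r := fun n =>
    Filter.inter_mem ((Filter.biInter_mem (Set.finite_Iic n)).2 fun k _ => hB k)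
      (Ultrafilter.compl_mem_iff_notMem.2 (hr.1 _ (Set.finite_Iic n)))
  have hself : ∀ m, m ∉ B' m := fun m hm => hm.2 (Set.mem_Iic.2 le_rfl)
  have hex : ∀ m, ∃ n, m ∉ B' n := fun m => ⟨m, hself m⟩
  set f : ℕ → ℕ := fun m => Nat.find (hex m) with hf
  have hflt : ∀ m k, k < f m → m ∈ B' k := fun m k hk => by
    have := Nat.find_min (hex m) hk
    simpa using this
  have hfspec : ∀ m, m ∉ B' (f m) := fun m => Nat.find_spec (hex m)
  rcases hr.2 (fun i => {m | f m = i}) (fiber_pairwise f) (fiber_cover f) with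
    ⟨i, hi⟩ | ⟨U₁, hU₁r, hU₁⟩
  · exfalso
    obtain ⟨m, hm1, hm2⟩ := Ultrafilter.nonempty_of_mem (Filter.inter_mem hi (hB' i))
    exact hfspec m (show m ∈ B' (f m) from hm1 ▸ hm2)
  set e : ℕ → ℕ := fun j => if h : (U₁ ∩ {m | f m = j}).Nonempty then h.choose else 0 with he
  have he_eq : ∀ m ∈ U₁, e (f m) = m := by
    intro m hm
    have hne : (U₁ ∩ {m' | f m' = f m}).Nonempty := ⟨m, hm, rfl⟩
    have h1 : e (f m) = hne.choose := dif_pos hne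
    rw [h1]
    exact hU₁ (f m) hne.choose_spec ⟨hm, rfl⟩
  set G : ℕ → ℕ := fun n => (Finset.range (n + 1)).sup e + 1 with hG
  have hGmono : Monotone G := fun a b hab =>
    Nat.add_le_add_right (Finset.sup_mono (Finset.range_subset_range.2 (by omega))) 1
  have hkey : ∀ n m, m ∈ U₁ → G n ≤ m → n < f m := by
    intro n m hm hGm
    by_contra h
    push_neg at h
    have h2 : e (f m) ≤ (Finset.range (n + 1)).sup e :=
      Finset.le_sup (Finset.mem_range.2 (by omega))
    rw [he_eq m hm] at h2
    simp only [hG] at hGm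
    omega
  set a : ℕ → ℕ := seqA G with ha
  have ha_succ : ∀ k, a (k + 1) = G (a k) + a k + 1 := fun k => rfl
  have ha_mono : StrictMono a := strictMono_nat_of_lt_succ fun k => by
    rw [ha_succ]; omega
  have ha_ge : ∀ k, k ≤ a k := fun k => by
    induction k with
    | zero => omega
    | succ k ih => rw [ha_succ]; omega
  have hexi : ∀ m, ∃ k, m < a (k + 1) := fun m => ⟨m, by have := ha_ge (m + 1); omega⟩
  set idx : ℕ → ℕ := fun m => Nat.find (hexi m) with hidx
  have hidx1 : ∀ m, m < a (idx m + 1) := fun m => Nat.find_spec (hexi m)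
  have hidx2 : ∀ m, 0 < idx m → a (idx m) ≤ m := by
    intro m h
    have h1 := Nat.find_min (hexi m) (show idx m - 1 < idx m by omega)
    have h2 : idx m - 1 + 1 = idx m := by omega
    rw [h2] at h1
    omega
  rcases hr.2 (fun k => {m | idx m = k}) (fiber_pairwise idx) (fiber_cover idx) with
    ⟨k, hk⟩ | ⟨V, hVr, hV⟩
  · exact absurd hk (hr.1 _ ((Set.finite_Iio (a (k + 1))).subset fun m hm => by
      simp only [Set.mem_setOf_eq] at hm
      exact Set.mem_Iio.2 (hm ▸ hidx1 m)))
  obtain ⟨W, hWr, hWpar⟩ : ∃ W ∈ r, ∀ n ∈ W, ∀ m ∈ W, (Even (idx n) ↔ Even (idx m)) := by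
    rcases r.mem_or_compl_mem {m | Even (idx m)} with h | h
    · exact ⟨_, h, fun n hn m hm => iff_of_true hn hm⟩
    · exact ⟨_, h, fun n hn m hm => iff_of_false hn hm⟩
  refine ⟨U₁ ∩ V ∩ W, Filter.inter_mem (Filter.inter_mem hU₁r hVr) hWr, ?_⟩
  rintro n ⟨⟨hnU, hnV⟩, hnW⟩ m ⟨⟨hmU, hmV⟩, hmW⟩ hnm
  have hle : idx n ≤ idx m := Nat.find_min' (hexi n) (lt_trans hnm (hidx1 m))
  have hne : idx n ≠ idx m := fun h => by
    have := hV (idx n) ⟨hnV, rfl⟩ ⟨hmV, h.symm⟩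
    omega
  have hpar := hWpar n hnW m hmW
  have h2 : idx n + 2 ≤ idx m := by
    rcases Nat.lt_or_ge (idx m) (idx n + 2) with h | h
    · have heq : idx m = idx n + 1 := by omega
      rw [heq, Nat.even_add_one] at hpar
      tauto
    · exact h
  have hm1 : a (idx m) ≤ m := hidx2 m (by omega)
  have hm2 : a (idx n + 2) ≤ a (idx m) := ha_mono.monotone h2
  have hm3 : a (idx n + 2) = G (a (idx n + 1)) + a (idx n + 1) + 1 := ha_succ _
  have hGn : G n ≤ G (a (idx n + 1)) := hGmono (le_of_lt (hidx1 n))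
  have hfm : n < f m := hkey n m hmU (by omega)
  have := (hflt m n hfm).1
  exact Set.mem_iInter₂.1 this n (Set.mem_Iic.2 le_rfl)

/-- Along a set in a Ramsey ultrafilter, every sequence in βω is constant or
injective with discrete range. -/
theorem ramsey_constant_or_discrete (r : Ultrafilter ℕ) (hr : IsRamsey r)
    (x : ℕ → Ultrafilter ℕ) :
    ∃ M ∈ r, (∀ n ∈ M, ∀ m ∈ M, x n = x m) ∨
      (Set.InjOn x M ∧ IsDiscreteSubset (x '' M)) := by
  classical
  have hexc : ∀ m, ∃ k, x k = x m := fun m => ⟨m, rfl⟩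
  set c : ℕ → ℕ := fun m => Nat.find (hexc m) with hc
  have hcspec : ∀ m, x (c m) = x m := fun m => Nat.find_spec (hexc m)
  have hceq : ∀ n m, x n = x m → c n = c m := by
    intro n m h
    exact le_antisymm (Nat.find_min' (hexc n) (by rw [hcspec m, h]))
      (Nat.find_min' (hexc m) (by rw [hcspec n, ← h]))
  rcases hr.2 (fun i => {m | c m = i}) (fiber_pairwise c) (fiber_cover c) with
    ⟨i, hi⟩ | ⟨Us, hUsr, hUs⟩
  · refine ⟨_, hi, Or.inl ?_⟩
    rintro n (hn : c n = i) m (hm : c m = i)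
    rw [← hcspec n, ← hcspec m, hn, hm]
  set y : Ultrafilter ℕ := r.bind x with hy
  have hmemy : ∀ s : Set ℕ, s ∈ y ↔ {n | s ∈ x n} ∈ r := fun s => Iff.rfl
  rcases r.mem_or_compl_mem {n | x n = y} with hS | hS
  · refine ⟨_, hS, Or.inl ?_⟩
    rintro n (hn : x n = y) m (hm : x m = y)
    rw [hn, hm]
  -- choose separating sets
  have hT : ∀ n, ∃ t : Set ℕ, x n ≠ y → t ∈ x n ∧ t ∉ y := by
    intro n
    by_cases h : x n = y
    · exact ⟨∅, fun h' => absurd h h'⟩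
    · by_contra hcon
      push_neg at hcon
      apply h
      symm
      exact Ultrafilter.coe_le_coe.1 (Filter.le_def.2 fun s hs => (hcon s).2 hs)
  choose T hT using hT
  set B : ℕ → Set ℕ := fun n => if x n = y then Set.univ else {m | (T n)ᶜ ∈ x m} with hB
  have hBr : ∀ n, B n ∈ r := by
    intro n
    by_cases h : x n = y
    · rw [hB]; simp only [if_pos h]; exact Filter.univ_mem
    · have h1 : (T n)ᶜ ∈ y := Ultrafilter.compl_mem_iff_notMem.2 (hT n h).2
      simpa [hB, h] using (hmemy _).1 h1
  obtain ⟨M₀, hM₀r, hM₀⟩ := ramsey_diag r hr B hBr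
  refine ⟨M₀ ∩ Us ∩ {n | x n = y}ᶜ,
    Filter.inter_mem (Filter.inter_mem hM₀r hUsr) hS, Or.inr ⟨?_, ?_⟩⟩
  · rintro n ⟨⟨_, hnU⟩, _⟩ m ⟨⟨_, hmU⟩, _⟩ hxnm
    exact hUs (c n) ⟨hnU, rfl⟩ ⟨hmU, (hceq n m hxnm).symm⟩
  · rintro d ⟨n, hnM, rfl⟩
    have hnM₀ : n ∈ M₀ := hnM.1.1
    have hny' : x n ≠ y := hnM.2
    set Mset : Set ℕ := M₀ ∩ Us ∩ {n | x n = y}ᶜ with hMset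
    have hBmem : ∀ n' m, n' ∈ Mset → m ∈ Mset → n' < m → (T n')ᶜ ∈ x m := by
      intro n' m hn' hm hnm
      have := hM₀ n' hn'.1.1 m hm.1.1 hnm
      rw [hB] at this
      simp only [if_neg (show ¬ x n' = y from hn'.2)] at this
      exact this
    set A : Set ℕ := T n \ ⋃ m ∈ Mset ∩ Set.Iio n, T m with hA
    have hAn : A ∈ x n := by
      have h1 : T n ∈ x n := (hT n hny').1
      have h2 : (⋃ m ∈ Mset ∩ Set.Iio n, T m)ᶜ ∈ x n := by
        rw [Set.compl_iUnion₂]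
        refine (Filter.biInter_mem ((Set.finite_Iio n).subset Set.inter_subset_right)).2 ?_
        intro m hm
        exact hBmem m n hm.1 hnM hm.2
      rw [hA, Set.diff_eq]
      exact Filter.inter_mem h1 h2
    refine ⟨{u : Ultrafilter ℕ | A ∈ u}, ultrafilter_isOpen_basic A, ?_⟩
    ext u
    simp only [Set.mem_inter_iff, Set.mem_setOf_eq, Set.mem_singleton_iff, Set.mem_image]
    constructor
    · rintro ⟨hAu, m, hmM, rfl⟩
      rcases lt_trichotomy m n with h | h | h
      · exfalso
        have h1 : A ⊆ (T m)ᶜ := fun z hz hzT =>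
          hz.2 (Set.mem_biUnion ⟨hmM, h⟩ hzT)
        have h2 : (T m)ᶜ ∈ x m := Filter.mem_of_superset hAu h1
        exact Ultrafilter.compl_mem_iff_notMem.1 h2 ((hT m hmM.2).1)
      · rw [h]
      · exfalso
        have h1 : (T n)ᶜ ∈ x m := hBmem n m hnM hmM h
        have h2 : T n ∈ x m := Filter.mem_of_superset hAu Set.diff_subset
        exact Ultrafilter.compl_mem_iff_notMem.1 h1 h2
    · rintro rfl
      exact ⟨hAn, n, hnM, rfl⟩
end

section
/- Let R be a set of Ramsey ultrafilters on ℕ and let A ⊆ βω be a set of cardinality strictly less than the cardinality of R. Then βω ∖ A, with the subspace topology, is doubly countably compact. -/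
/-- A topological space `X` is doubly countably compact if every double sequence
`(f n m)_{n<m}` has a double `p`-limit for some free ultrafilter `p`: there are `A ∈ p`,
points `xn n ∈ X` for `n ∈ A` and `x ∈ X` such that `xn n` is the `p`-limit of
`(f n m)_{m>n}` for each `n ∈ A`, and `x` is the `p`-limit of `(xn n)_{n∈A}`. -/
def DoublyCountablyCompact (X : Type*) [TopologicalSpace X] : Prop :=
  ∀ f : ℕ → ℕ → X, ∃ p : Ultrafilter ℕ, IsFree p ∧ ∃ A ∈ p, ∃ xn : ℕ → X, ∃ x : X,
    (∀ n ∈ A, ∀ U : Set X, IsOpen U → xn n ∈ U → {m : ℕ | n < m ∧ f n m ∈ U} ∈ p) ∧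
    (∀ U : Set X, IsOpen U → x ∈ U → {n : ℕ | n ∈ A ∧ xn n ∈ U} ∈ p)


open Set


section Basics

lemma mem_ubind {u : Ultrafilter ℕ} {z : ℕ → Ultrafilter ℕ} {s : Set ℕ} :
    s ∈ u.bind z ↔ {m | s ∈ z m} ∈ u := Filter.mem_bind'

lemma ubind_const (u : Ultrafilter ℕ) (w : Ultrafilter ℕ) : u.bind (fun _ => w) = w := by
  ext s
  rw [mem_ubind]
  by_cases h : s ∈ w
  · have : {m : ℕ | s ∈ w} = Set.univ := by ext m; simp [h]
    rw [this]; exact iff_of_true Filter.univ_mem h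
  · have : {m : ℕ | s ∈ w} = (∅ : Set ℕ) := by ext m; simp [h]
    rw [this]; exact iff_of_false (fun hh => Ultrafilter.empty_notMem hh) h

lemma ubind_congr {u : Ultrafilter ℕ} {z z' : ℕ → Ultrafilter ℕ}
    (h : {m | z m = z' m} ∈ u) : u.bind z = u.bind z' := by
  ext s
  constructor <;> intro hs <;> rw [mem_ubind] at hs ⊢ <;>
    exact u.toFilter.mem_of_superset (Filter.inter_mem h hs) (by rintro m ⟨h1, h2⟩; simp_all)

lemma exists_mem_not_mem {w w' : Ultrafilter ℕ} (h : w' ≠ w) : ∃ K, K ∈ w' ∧ K ∉ w := by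
  by_contra hc
  push_neg at hc
  exact h (Ultrafilter.eq_of_le (f := w) (g := w') fun s hs => hc _ hs).symm

lemma umem_diff {w w' : Ultrafilter ℕ} (h : w ≠ w') : ∃ K, K ∈ w ∧ K ∉ w' := by
  by_contra hc
  push_neg at hc
  exact h (Ultrafilter.eq_of_le (f := w') (g := w) fun s hs => hc _ hs).symm

lemma IsFree.compl_mem {p : Ultrafilter ℕ} (hp : IsFree p) {S : Set ℕ} (h : S.Finite) :
    Sᶜ ∈ p := (Ultrafilter.compl_mem_iff_notMem).2 (hp S h)

lemma IsFree.gt_mem {p : Ultrafilter ℕ} (hp : IsFree p) (n : ℕ) : {m | n < m} ∈ p := by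
  have h : {m : ℕ | n < m} = {m : ℕ | m ≤ n}ᶜ := by ext m; simp [not_le]
  rw [h]
  exact hp.compl_mem (Set.finite_Iic n)

lemma IsFree.infinite_of_mem {p : Ultrafilter ℕ} (hp : IsFree p) {S : Set ℕ} (h : S ∈ p) :
    S.Infinite := fun hfin => hp S hfin h

lemma IsFree.diff_finite_mem {p : Ultrafilter ℕ} (hp : IsFree p) {S F : Set ℕ}
    (h : S ∈ p) (hF : F.Finite) : S \ F ∈ p := by
  have := Filter.inter_mem h (hp.compl_mem hF)
  exact p.toFilter.mem_of_superset this (by intro x hx; exact ⟨hx.1, hx.2⟩)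

lemma not_mem_of_subsingleton {p : Ultrafilter ℕ} (hp : IsFree p) {S : Set ℕ}
    (h : S.Subsingleton) : S ∉ p := hp S h.finite

/-- basic neighborhoods in the ultrafilter space -/
lemma exists_basic_nbhd {V : Set (Ultrafilter ℕ)} (hV : IsOpen V) {y : Ultrafilter ℕ}
    (hy : y ∈ V) : ∃ s : Set ℕ, s ∈ y ∧ {q : Ultrafilter ℕ | s ∈ q} ⊆ V := by
  obtain ⟨t, ht, hyt, htV⟩ := ultrafilterBasis_is_basis.exists_subset_of_mem_open hy hV
  obtain ⟨s, rfl⟩ := ht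
  exact ⟨s, hyt, htV⟩

end Basics

section Assemble

variable (Λ : Set (Ultrafilter ℕ))

lemma assemble (f : ℕ → ℕ → ↥(Λᶜ)) (p : Ultrafilter ℕ) (hfree : IsFree p)
    (T : Set ℕ) (hT : T ∈ p)
    (hrow : ∀ n ∈ T, p.bind (fun m => (f n m : Ultrafilter ℕ)) ∉ Λ)
    (htop : p.bind (fun n => p.bind (fun m => (f n m : Ultrafilter ℕ))) ∉ Λ) :
    ∃ q : Ultrafilter ℕ, IsFree q ∧ ∃ A ∈ q, ∃ xn : ℕ → ↥(Λᶜ), ∃ x : ↥(Λᶜ),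
      (∀ n ∈ A, ∀ U : Set ↥(Λᶜ), IsOpen U → xn n ∈ U → {m : ℕ | n < m ∧ f n m ∈ U} ∈ q) ∧
      (∀ U : Set ↥(Λᶜ), IsOpen U → x ∈ U → {n : ℕ | n ∈ A ∧ xn n ∈ U} ∈ q) := by
  classical
  set z : ℕ → ℕ → Ultrafilter ℕ := fun n m => (f n m : Ultrafilter ℕ) with hz
  refine ⟨p, hfree, T, hT, ?_⟩
  set xn : ℕ → ↥(Λᶜ) := fun n =>
    if h : p.bind (z n) ∈ Λᶜ then ⟨p.bind (z n), h⟩ else f 0 1 with hxn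
  have hxnval : ∀ n ∈ T, (xn n : Ultrafilter ℕ) = p.bind (z n) := by
    intro n hn
    rw [hxn]
    simp only []
    rw [dif_pos (show p.bind (z n) ∈ Λᶜ from hrow n hn)]
  refine ⟨xn, ⟨p.bind (fun n => p.bind (z n)), htop⟩, ?_, ?_⟩
  · intro n hn U hU hxU
    obtain ⟨V, hVopen, hVU⟩ := isOpen_induced_iff.1 hU
    rw [← hVU] at hxU
    obtain ⟨s, hs, hsV⟩ := exists_basic_nbhd hVopen hxU
    rw [hxnval n hn] at hs
    rw [mem_ubind] at hs
    have h2 : {m | n < m} ∈ p := hfree.gt_mem n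
    refine p.toFilter.mem_of_superset (Filter.inter_mem hs h2) ?_
    rintro m ⟨h3, h4⟩
    refine ⟨h4, ?_⟩
    rw [← hVU]
    exact hsV h3
  · intro U hU hxU
    obtain ⟨V, hVopen, hVU⟩ := isOpen_induced_iff.1 hU
    rw [← hVU] at hxU
    obtain ⟨s, hs, hsV⟩ := exists_basic_nbhd hVopen hxU
    rw [mem_ubind] at hs
    refine p.toFilter.mem_of_superset (Filter.inter_mem hs hT) ?_
    rintro n ⟨h3, h4⟩
    refine ⟨h4, ?_⟩
    rw [← hVU]
    apply hsV
    show s ∈ (xn n : Ultrafilter ℕ)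
    rw [hxnval n h4]
    exact h3

end Assemble


section Pool

abbrev PT := Finset ℕ × Finset (Finset ℕ)

noncomputable def jmap (T : Set ℕ) (hT : T.Infinite) : PT ↪ ℕ :=
  ((Denumerable.eqv PT).toEmbedding.trans (hT.natEmbedding T)).trans
    (Function.Embedding.subtype _)

lemma jmap_mem (T : Set ℕ) (hT : T.Infinite) (a : PT) : jmap T hT a ∈ T := by
  simp only [jmap, Function.Embedding.trans_apply, Function.Embedding.coe_subtype]
  exact Subtype.coe_prop _

noncomputable def trace (x : Set ℕ) (s : Finset ℕ) : Finset ℕ :=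
  (s.finite_toSet.inter_of_left x).toFinset

lemma mem_trace {x : Set ℕ} {s : Finset ℕ} {d : ℕ} :
    d ∈ trace x s ↔ d ∈ s ∧ d ∈ x := by
  simp [trace]

def Idef (x : Set ℕ) : Set PT := {a | trace x a.1 ∈ a.2}

noncomputable def Iset (T : Set ℕ) (hT : T.Infinite) (x : Set ℕ) : Set ℕ :=
  jmap T hT '' Idef x

lemma mem_Iset {T : Set ℕ} {hT : T.Infinite} {x : Set ℕ} {a : PT} :
    jmap T hT a ∈ Iset T hT x ↔ a ∈ Idef x := by
  constructor
  · rintro ⟨a', ha', he⟩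
    rwa [(jmap T hT).injective he] at ha'
  · intro h; exact ⟨a, h, rfl⟩

lemma Idef_iff_single {x : Set ℕ} {d : ℕ} :
    (({d}, ({{d}} : Finset (Finset ℕ))) ∈ Idef x) ↔ d ∈ x := by
  simp only [Idef, Set.mem_setOf_eq, Finset.mem_singleton]
  constructor
  · intro h
    have := Finset.ext_iff.1 h d
    rw [mem_trace] at this
    simp at this
    exact this
  · intro h
    ext e
    rw [mem_trace]
    simp only [Finset.mem_singleton]
    constructor
    · rintro ⟨he, _⟩; simpa using he
    · rintro rfl; exact ⟨by simp, h⟩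

lemma Iset_inj (T : Set ℕ) (hT : T.Infinite) : Function.Injective (Iset T hT) := by
  intro x x' h
  by_contra hne
  obtain ⟨d, hd⟩ : ∃ d, ¬(d ∈ x ↔ d ∈ x') := by
    by_contra hc; push_neg at hc
    exact hne (Set.ext fun d => hc d)
  set a : PT := ({d}, ({{d}} : Finset (Finset ℕ))) with ha
  have h1 : a ∈ Idef x ↔ d ∈ x := Idef_iff_single
  have h2 : a ∈ Idef x' ↔ d ∈ x' := Idef_iff_single
  have h3 : (jmap T hT a ∈ Iset T hT x) ↔ (jmap T hT a ∈ Iset T hT x') := by rw [h]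
  rw [mem_Iset, mem_Iset, h1, h2] at h3
  exact hd h3

lemma sep_witness (T : Set ℕ) (hT : T.Infinite) (P N : Set (Set ℕ)) (hP : P.Finite)
    (hN : N.Finite) (hPN : ∀ x ∈ P, ∀ y ∈ N, x ≠ y) (C : Set ℕ) (hC : C.Finite) :
    ∃ a : PT, (∀ x ∈ P, a ∈ Idef x) ∧ (∀ y ∈ N, a ∉ Idef y) ∧ jmap T hT a ∉ C := by
  classical
  -- separating points
  have hsep : ∀ q : Set ℕ × Set ℕ, q.1 ∈ P → q.2 ∈ N → ∃ d, ¬(d ∈ q.1 ↔ d ∈ q.2) := by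
    intro q h1 h2
    by_contra hc; push_neg at hc
    exact hPN q.1 h1 q.2 h2 (Set.ext fun d => hc d)
  set dch : Set ℕ × Set ℕ → ℕ := fun q =>
    if h : q.1 ∈ P ∧ q.2 ∈ N then (hsep q h.1 h.2).choose else 0 with hdch
  have hdchs : ∀ q : Set ℕ × Set ℕ, q.1 ∈ P → q.2 ∈ N → ¬(dch q ∈ q.1 ↔ dch q ∈ q.2) := by
    intro q h1 h2
    rw [hdch]
    simp only [dif_pos (And.intro h1 h2)]
    exact (hsep q h1 h2).choose_spec
  set s₀ : Finset ℕ := ((hP.prod hN).image dch).toFinset with hs₀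
  have hds₀ : ∀ x ∈ P, ∀ y ∈ N, dch (x, y) ∈ s₀ := by
    intro x hx y hy
    rw [hs₀]
    rw [Set.Finite.mem_toFinset]
    exact ⟨(x,y), ⟨hx, hy⟩, rfl⟩
  -- candidate for each k
  set F : ℕ → Finset (Finset ℕ) := fun k => hP.toFinset.image (fun x => trace x (insert k s₀))
    with hF
  set aa : ℕ → PT := fun k => (insert k s₀, F k) with haa
  have key1 : ∀ k, ∀ x ∈ P, aa k ∈ Idef x := by
    intro k x hx
    show trace x (insert k s₀) ∈ F k
    rw [hF]
    exact Finset.mem_image.2 ⟨x, by rwa [Set.Finite.mem_toFinset], rfl⟩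
  have key2 : ∀ k, ∀ y ∈ N, aa k ∉ Idef y := by
    intro k y hy hmem
    have : trace y (insert k s₀) ∈ F k := hmem
    rw [hF, Finset.mem_image] at this
    obtain ⟨x, hx, hxy⟩ := this
    rw [Set.Finite.mem_toFinset] at hx
    have hd := hdchs (x, y) hx hy
    have hds : dch (x, y) ∈ insert (k) s₀ := Finset.mem_insert_of_mem (hds₀ x hx y hy)
    have e1 : dch (x,y) ∈ trace x (insert k s₀) ↔ dch (x,y) ∈ x := by
      rw [mem_trace]; exact ⟨fun h => h.2, fun h => ⟨hds, h⟩⟩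
    have e2 : dch (x,y) ∈ trace y (insert k s₀) ↔ dch (x,y) ∈ y := by
      rw [mem_trace]; exact ⟨fun h => h.2, fun h => ⟨hds, h⟩⟩
    rw [hxy] at e1
    exact hd (by rw [← e1, ← e2])
  -- pick k with jmap (aa k) ∉ C
  have hinj : Set.InjOn (fun k => jmap T hT (aa k)) {k | k ∉ s₀} := by
    intro k hk k' hk' he
    have : aa k = aa k' := (jmap T hT).injective he
    have h1 : insert k s₀ = insert k' s₀ := congrArg Prod.fst this
    have : k ∈ insert k' s₀ := h1 ▸ Finset.mem_insert_self k s₀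
    rcases Finset.mem_insert.1 this with h | h
    · exact h
    · exact absurd h hk
  have hinf : {k | k ∉ s₀}.Infinite := by
    have : {k | k ∉ s₀} = (↑s₀ : Set ℕ)ᶜ := rfl
    rw [this]
    exact Set.Finite.infinite_compl s₀.finite_toSet
  obtain ⟨k, hk1, hk2⟩ : ∃ k, k ∉ s₀ ∧ jmap T hT (aa k) ∉ C := by
    by_contra hc; push_neg at hc
    have : (fun k => jmap T hT (aa k)) '' {k | k ∉ s₀} ⊆ C := by
      rintro _ ⟨k, hk, rfl⟩; exact hc k hk
    exact (hinf.image hinj) (hC.subset this)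
  exact ⟨aa k, key1 k, key2 k, hk2⟩

theorem pool_large (T : Set ℕ) (hT : T.Infinite) :
    ∃ G : (Set ℕ → Bool) → Ultrafilter ℕ, Function.Injective G ∧
      ∀ g, IsFree (G g) ∧ T ∈ G g := by
  classical
  set I := Iset T hT with hI
  set Sg : (Set ℕ → Bool) → Set (Set ℕ) := fun g =>
    insert T ({s | ∃ x, s = if g x then I x else (I x)ᶜ} ∪ {s | sᶜ.Finite}) with hSg
  have cond : ∀ g, ∀ T' : Finset (Set ℕ), (↑T' : Set (Set ℕ)) ⊆ Sg g →
      (⋂₀ (↑T' : Set (Set ℕ))).Nonempty := by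
    intro g T' hT'
    set P : Set (Set ℕ) := {x | g x = true ∧ I x ∈ (↑T' : Set (Set ℕ))} with hPdef
    set N : Set (Set ℕ) := {x | g x = false ∧ (I x)ᶜ ∈ (↑T' : Set (Set ℕ))} with hNdef
    have hPfin : P.Finite := by
      have : P ⊆ I ⁻¹' (↑T' : Set (Set ℕ)) := fun x hx => hx.2
      exact ((T'.finite_toSet).preimage (Set.injOn_of_injective (Iset_inj T hT))).subset this
    have hNfin : N.Finite := by
      have hinj2 : Function.Injective (fun x => (I x)ᶜ) := fun x y h =>
        Iset_inj T hT (compl_injective h)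
      have : N ⊆ (fun x => (I x)ᶜ) ⁻¹' (↑T' : Set (Set ℕ)) := fun x hx => hx.2
      exact ((T'.finite_toSet).preimage (Set.injOn_of_injective hinj2)).subset this
    have hPN : ∀ x ∈ P, ∀ y ∈ N, x ≠ y := by
      rintro x hx y hy rfl
      exact absurd hy.1 (by simp [hx.1])
    set C : Set ℕ := ⋃₀ ((fun s => sᶜ) '' {s | s ∈ (↑T' : Set (Set ℕ)) ∧ sᶜ.Finite}) with hC
    have hCfin : C.Finite := by
      apply Set.Finite.sUnion
      · exact (T'.finite_toSet.subset (fun s hs => hs.1)).image _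
      · rintro _ ⟨s, hs, rfl⟩; exact hs.2
    obtain ⟨a, ha1, ha2, ha3⟩ := sep_witness T hT P N hPfin hNfin hPN C hCfin
    refine ⟨jmap T hT a, ?_⟩
    rintro s hs
    rcases hT' hs with h | h | h
    · rw [h]; exact jmap_mem T hT a
    · obtain ⟨x, rfl⟩ := h
      by_cases hgx : g x
      · rw [if_pos hgx]
        rw [if_pos hgx] at hs
        exact mem_Iset.2 (ha1 x ⟨hgx, hs⟩)
      · rw [if_neg hgx]
        rw [if_neg hgx] at hs
        intro hmem
        exact ha2 x ⟨Bool.eq_false_iff.2 hgx, hs⟩ (mem_Iset.1 hmem)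
    · by_contra hns
      have : jmap T hT a ∈ C := ⟨sᶜ, ⟨s, ⟨hs, h⟩, rfl⟩, hns⟩
      exact ha3 this
  choose u hu using fun g => Ultrafilter.exists_ultrafilter_of_finite_inter_nonempty _ (cond g)
  refine ⟨u, ?_, ?_⟩
  · intro g g' he
    by_contra hne
    obtain ⟨x, hx⟩ : ∃ x, g x ≠ g' x := by
      by_contra hc; push_neg at hc
      exact hne (funext hc)
    have h1 : (if g x then I x else (I x)ᶜ) ∈ u g := hu g (Or.inr (Or.inl ⟨x, rfl⟩))
    have h2 : (if g' x then I x else (I x)ᶜ) ∈ u g' := hu g' (Or.inr (Or.inl ⟨x, rfl⟩))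
    rw [← he] at h2
    rcases Bool.dichotomy (g x) with hgx | hgx <;> rcases Bool.dichotomy (g' x) with hgx' | hgx'
    · rw [hgx, hgx'] at hx; exact hx rfl
    · rw [if_neg (by rw [hgx]; exact Bool.false_ne_true)] at h1
      rw [if_pos hgx'] at h2
      exact (Ultrafilter.compl_mem_iff_notMem.1 h1) h2
    · rw [if_pos hgx] at h1
      rw [if_neg (by rw [hgx']; exact Bool.false_ne_true)] at h2
      exact (Ultrafilter.compl_mem_iff_notMem.1 h2) h1
    · rw [hgx, hgx'] at hx; exact hx rfl
  · intro g
    constructor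
    · intro B hB hBu
      have : Bᶜ ∈ u g := hu g (Or.inr (Or.inr (by simpa using hB)))
      exact (Ultrafilter.compl_mem_iff_notMem.1 this) hBu
    · exact hu g (Or.inl rfl)

end Pool

open Set

-- (IsFree already defined)


section Helpers

lemma memU_mono {u : Ultrafilter ℕ} {s s' : Set ℕ} (h : s ∈ u) (hss : s ⊆ s') : s' ∈ u :=
  u.toFilter.mem_of_superset h hss

lemma not_mem_of_disjoint {u : Ultrafilter ℕ} {P K : Set ℕ} (hK : K ∈ u)
    (hd : P ∩ K = ∅) : P ∉ u := by
  intro hP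
  have := Filter.inter_mem hP hK
  rw [hd] at this
  exact Ultrafilter.empty_notMem this

lemma not_mem_subsingleton {u : Ultrafilter ℕ} (hfree : IsFree u) {S : Set ℕ}
    (h : S.Subsingleton) : S ∉ u := hfree S h.finite

lemma ne_mem_of_injOn {u : Ultrafilter ℕ} (hfree : IsFree u) {z : ℕ → Ultrafilter ℕ}
    {E : Set ℕ} (hE : E ∈ u) (hinj : Set.InjOn z E) (F : Ultrafilter ℕ) :
    {m | z m ≠ F} ∈ u := by
  set S := {m | m ∈ E ∧ z m = F} with hS
  have hsub : S.Subsingleton := by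
    intro m hm m' hm'
    exact hinj hm.1 hm'.1 (hm.2.trans hm'.2.symm)
  have hSu : S ∉ u := not_mem_subsingleton hfree hsub
  have : E ⊆ S ∪ {m | z m ≠ F} := by
    intro m hm
    by_cases h : z m = F
    · exact Or.inl ⟨hm, h⟩
    · exact Or.inr h
  rcases (Ultrafilter.union_mem_iff).1 (memU_mono hE this) with h | h
  · exact absurd h hSu
  · exact h

end Helpers

section Count

variable (T : Set ℕ)

abbrev Pool : Type := {p : Ultrafilter ℕ // IsFree p ∧ T ∈ p}

theorem pool_large' (hT : T.Infinite) :
    ∃ G : (Set ℕ → Bool) → Pool T, Function.Injective G := by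
  obtain ⟨G, hGinj, hGspec⟩ := pool_large T hT
  refine ⟨fun g => ⟨G g, hGspec g⟩, ?_⟩
  intro g g' h
  exact hGinj (congrArg Subtype.val h)

lemma exists_good_pool (hT : T.Infinite) (Λ : Set (Ultrafilter ℕ))
    (hΛ : Cardinal.mk ↥Λ < Cardinal.mk (Set (Set ℕ))) {ι : Type} [Countable ι]
    (e : ι → Pool T → Ultrafilter ℕ) (he : ∀ k, Function.Injective (e k)) :
    ∃ q : Pool T, ∀ k, e k q ∉ Λ := by
  by_contra hc
  push_neg at hc
  choose k hk using hc
  have hΦ : Function.Injective (fun q : Pool T => ((k q, ⟨e (k q) q, hk q⟩) : ι × ↥Λ)) := by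
    intro q q' h
    have h1 : k q = k q' := congrArg Prod.fst h
    have h2 : e (k q) q = e (k q') q' := congrArg (fun r : ι × ↥Λ => (r.2 : Ultrafilter ℕ)) h
    rw [← h1] at h2
    exact he (k q) h2
  obtain ⟨G, hG⟩ := pool_large' T hT
  have c1 : Cardinal.mk (Set (Set ℕ)) ≤ Cardinal.mk (Pool T) := by
    have : Cardinal.mk (Set (Set ℕ)) = Cardinal.mk (Set ℕ → Bool) :=
      Cardinal.mk_congr (Equiv.arrowCongr (Equiv.refl (Set ℕ)) (Equiv.propEquivBool))
    rw [this]
    exact Cardinal.mk_le_of_injective hG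
  have c2 : Cardinal.mk (Pool T) ≤ Cardinal.mk (ι × ↥Λ) := Cardinal.mk_le_of_injective hΦ
  have c3 : Cardinal.mk (ι × ↥Λ) = Cardinal.mk ι * Cardinal.mk ↥Λ := by
    rw [Cardinal.mk_prod]; simp
  have c4 : Cardinal.mk ι * Cardinal.mk ↥Λ < Cardinal.mk (Set (Set ℕ)) := by
    apply Cardinal.mul_lt_of_lt
    · exact Cardinal.aleph0_le_mk _
    · calc Cardinal.mk ι ≤ Cardinal.aleph0 := Cardinal.mk_le_aleph0
        _ < Cardinal.mk (Set ℕ) := by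
            rw [Cardinal.mk_set, ← Cardinal.mk_nat]; exact Cardinal.cantor _
        _ < Cardinal.mk (Set (Set ℕ)) := by
            rw [Cardinal.mk_set (α := Set ℕ)]; exact Cardinal.cantor _
    · exact hΛ
  have := c1.trans (c2.trans_eq c3)
  exact absurd this (not_le.2 c4)

lemma eval_injective (t : ℕ → ℕ) (hst : StrictMono t)
    (e : Pool T → Ultrafilter ℕ) (Q : ℕ → Set ℕ)
    (hQdisj : ∀ i j, i ≠ j → Q i ∩ Q j = ∅)
    (hpat : ∀ q : Pool T, ∀ V : Set ℕ, V ∈ q.1 → (⋃ j ∈ {j | t j ∈ V}, Q j) ∈ e q) :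
    Function.Injective e := by
  intro q q' h
  by_contra hne
  have hval : q.1 ≠ q'.1 := fun hh => hne (Subtype.ext hh)
  obtain ⟨V, hV, hV'⟩ : ∃ V, V ∈ q.1 ∧ V ∉ q'.1 := by
    by_contra hcc
    push_neg at hcc
    exact hval (Ultrafilter.eq_of_le (f := q'.1) (g := q.1) (fun s hs => hcc s hs)).symm
  have hVc : Vᶜ ∈ q'.1 := Ultrafilter.compl_mem_iff_notMem.2 hV'
  have h1 : (⋃ j ∈ {j | t j ∈ V}, Q j) ∈ e q := hpat q V hV
  have h2 : (⋃ j ∈ {j | t j ∈ Vᶜ}, Q j) ∈ e q' := hpat q' Vᶜ hVc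
  rw [h] at h1
  have hd : (⋃ j ∈ {j | t j ∈ V}, Q j) ∩ (⋃ j ∈ {j | t j ∈ Vᶜ}, Q j) = ∅ := by
    ext m
    simp only [Set.mem_inter_iff, Set.mem_iUnion, Set.mem_empty_iff_false, iff_false]
    rintro ⟨⟨j, hj, hm⟩, ⟨j', hj', hm'⟩⟩
    rcases eq_or_ne j j' with rfl | hjj
    · exact hj' hj
    · have := hQdisj j j' hjj
      exact absurd (Set.mem_inter hm hm') (by rw [this]; exact fun h => h)
  exact not_mem_of_disjoint h2 hd h1

end Count

section Ramsey

lemma ramsey_dichotomy {u : Ultrafilter ℕ} (hu : IsRamsey u) {β : Type} (g : ℕ → β) :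
    (∃ c, {m | g m = c} ∈ u) ∨ (∃ E ∈ u, Set.InjOn g E) := by
  classical
  set P : ℕ → Set ℕ := fun k => {m | g m = g k ∧ ∀ k' < k, g k' ≠ g k} with hP
  have hdisj : Pairwise fun i j => Disjoint (P i) (P j) := by
    intro i j hij
    rw [Set.disjoint_left]
    rintro m ⟨hm1, hm2⟩ ⟨hm1', hm2'⟩
    rcases lt_trichotomy i j with h | h | h
    · exact hm2' i h (hm1 ▸ hm1' ▸ rfl)
    · exact hij h
    · exact hm2 j h (hm1' ▸ hm1 ▸ rfl)
  have hcover : (⋃ i, P i) = Set.univ := by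
    ext m
    simp only [Set.mem_iUnion, Set.mem_univ, iff_true]
    have hex : ∃ k, g k = g m := ⟨m, rfl⟩
    refine ⟨Nat.find hex, ?_, ?_⟩
    · exact (Nat.find_spec hex).symm ▸ rfl
    · intro k' hk' he
      exact Nat.find_min hex hk' (he ▸ (Nat.find_spec hex))
  rcases hu.2 P hdisj hcover with ⟨i, hi⟩ | ⟨U, hU, hsel⟩
  · left
    exact ⟨g i, memU_mono hi (fun m hm => hm.1)⟩
  · right
    refine ⟨U, hU, ?_⟩
    intro m hm m' hm' he
    have hex : ∃ k, g k = g m := ⟨m, rfl⟩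
    set k := Nat.find hex with hk
    have hmk : m ∈ U ∩ P k := by
      refine ⟨hm, (Nat.find_spec hex).symm, ?_⟩
      intro k' hk' hgk
      exact Nat.find_min hex hk' (hgk ▸ Nat.find_spec hex)
    have hmk' : m' ∈ U ∩ P k := by
      refine ⟨hm', he.symm.trans ((Nat.find_spec hex).symm ▸ rfl), ?_⟩
      intro k' hk' hgk
      exact Nat.find_min hex hk' (hgk ▸ Nat.find_spec hex)
    exact hsel k hmk hmk'

end Ramsey

section Engine

lemma engine (u : Ultrafilter ℕ) {State : Type} (Inv : State → Prop) (init : State)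
    (hinit : Inv init) (cand : State → Set ℕ) (hcand : ∀ s, Inv s → cand s ∈ u)
    (upd : State → ℕ → State) (hupd : ∀ s m, Inv s → m ∈ cand s → Inv (upd s m)) :
    ∃ (σ : ℕ → State) (t : ℕ → ℕ), σ 0 = init ∧
      ∀ j, Inv (σ j) ∧ t j ∈ cand (σ j) ∧ σ (j + 1) = upd (σ j) (t j) := by
  classical
  have hne : ∀ s : {s : State // Inv s}, (cand s.1).Nonempty :=
    fun s => Ultrafilter.nonempty_of_mem (hcand s.1 s.2)
  set next : {s : State // Inv s} → {s : State // Inv s} := fun s =>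
    ⟨upd s.1 (hne s).choose, hupd s.1 _ s.2 (hne s).choose_spec⟩ with hnext
  set ρ : ℕ → {s : State // Inv s} := fun j => next^[j] ⟨init, hinit⟩ with hρ
  refine ⟨fun j => (ρ j).1, fun j => (hne (ρ j)).choose, rfl, fun j => ?_⟩
  refine ⟨(ρ j).2, (hne (ρ j)).choose_spec, ?_⟩
  show (ρ (j+1)).1 = _
  have : ρ (j + 1) = next (ρ j) := Function.iterate_succ_apply' next j _
  rw [this]

end Engine

open Set

-- (IsFree already defined)








section ListHelpers

lemma list_forall_mem {u : Ultrafilter ℕ} {α : Type*} (l : List α) (P : α → ℕ → Prop)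
    (h : ∀ a ∈ l, {m | P a m} ∈ u) : {m | ∀ a ∈ l, P a m} ∈ u := by
  induction l with
  | nil => exact memU_mono Filter.univ_mem (by intro m _; simp)
  | cons a l ih =>
      have h1 : {m | P a m} ∈ u := h a List.mem_cons_self
      have h2 : {m | ∀ b ∈ l, P b m} ∈ u := ih (fun b hb => h b (List.mem_cons_of_mem a hb))
      refine memU_mono (Filter.inter_mem h1 h2) ?_
      rintro m ⟨hm1, hm2⟩ b hb
      rcases List.mem_cons.1 hb with rfl | hb'
      · exact hm1
      · exact hm2 b hb'

lemma list_gt_mem {u : Ultrafilter ℕ} (hfree : IsFree u) (l : List ℕ) :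
    {m | ∀ a ∈ l, a < m} ∈ u :=
  list_forall_mem l (fun a m => a < m) (fun a _ => hfree.gt_mem a)

end ListHelpers

section SS

/-- the union of the pieces recorded in the state -/
def uold (l : List (ℕ × Set ℕ)) : Set ℕ := {x | ∃ p ∈ l, x ∈ p.2}

open scoped Classical in
noncomputable def mkQ (u : Ultrafilter ℕ) (v : ℕ → Ultrafilter ℕ)
    (l : List (ℕ × Set ℕ)) (m : ℕ) : Set ℕ :=
  if h : u.bind v ≠ v m then (uold l ∪ (exists_mem_not_mem h).choose)ᶜ else ∅

lemma uold_not_mem {l : List (ℕ × Set ℕ)} {w : Ultrafilter ℕ}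
    (h : ∀ p ∈ l, p.2 ∉ w) : uold l ∉ w := by
  have : {x | ∀ p ∈ l, x ∉ p.2} ∈ w := list_forall_mem l (fun p x => x ∉ p.2)
    (fun p hp => (Ultrafilter.compl_mem_iff_notMem).2 (h p hp))
  apply not_mem_of_disjoint this
  ext x
  simp only [uold, Set.mem_inter_iff, Set.mem_setOf_eq, Set.mem_empty_iff_false, iff_false]
  rintro ⟨⟨p, hp, hx⟩, hall⟩
  exact hall p hp hx

lemma mkQ_spec (u : Ultrafilter ℕ) (v : ℕ → Ultrafilter ℕ)
    {l : List (ℕ × Set ℕ)} {m : ℕ} (hne : u.bind v ≠ v m)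
    (hold : ∀ p ∈ l, p.2 ∉ v m) :
    mkQ u v l m ∈ v m ∧ mkQ u v l m ∉ u.bind v ∧ mkQ u v l m ∩ uold l = ∅ := by
  rw [mkQ, dif_pos hne]
  obtain ⟨hK1, hK2⟩ := (exists_mem_not_mem hne).choose_spec
  refine ⟨?_, ?_, ?_⟩
  · rw [Set.compl_union]
    have h1 : (uold l)ᶜ ∈ v m := (Ultrafilter.compl_mem_iff_notMem).2 (uold_not_mem hold)
    have h2 : ((exists_mem_not_mem hne).choose)ᶜ ∈ v m :=
      (Ultrafilter.compl_mem_iff_notMem).2 hK2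
    exact Filter.inter_mem h1 h2
  · apply not_mem_of_disjoint hK1
    rw [Set.compl_union]
    ext x
    simp only [Set.mem_inter_iff, Set.mem_empty_iff_false, iff_false]
    rintro ⟨⟨_, h2⟩, h3⟩
    exact h2 h3
  · rw [Set.compl_union]
    ext x
    simp only [Set.mem_inter_iff, Set.mem_empty_iff_false, iff_false]
    rintro ⟨⟨h1, _⟩, h2⟩
    exact h1 h2

theorem single_seq (u : Ultrafilter ℕ) (v : ℕ → Ultrafilter ℕ)
    (hfree : IsFree u) (E₀ : Set ℕ) (hE₀ : E₀ ∈ u)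
    (hinj : Set.InjOn v E₀) (EXTRA : List ℕ → Set ℕ) (hEXTRA : ∀ l, EXTRA l ∈ u) :
    ∃ t : ℕ → ℕ, StrictMono t ∧ (∀ j, t j ∈ EXTRA ((List.range j).map t)) ∧
      ∃ Q : ℕ → Set ℕ, (∀ i j, i ≠ j → Q i ∩ Q j = ∅) ∧ ∀ j, Q j ∈ v (t j) := by
  classical
  set Inv : List (ℕ × Set ℕ) → Prop := fun l => ∀ p ∈ l, p.2 ∉ u.bind v with hInv
  set cand : List (ℕ × Set ℕ) → Set ℕ := fun l =>
    EXTRA (l.map Prod.fst) ∩ E₀ ∩ {m | u.bind v ≠ v m} ∩ {m | ∀ p ∈ l, p.2 ∉ v m} ∩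
      {m | ∀ a ∈ l.map Prod.fst, a < m} with hcand_def
  have hcand : ∀ l, Inv l → cand l ∈ u := by
    intro l hl
    refine Filter.inter_mem (Filter.inter_mem (Filter.inter_mem (Filter.inter_mem
      (hEXTRA _) hE₀) ?_) ?_) (list_gt_mem hfree _)
    · exact memU_mono (ne_mem_of_injOn hfree hE₀ hinj (u.bind v)) (fun m hm => Ne.symm hm)
    · refine list_forall_mem l (fun p m => p.2 ∉ v m) ?_
      intro p hp
      have h1 : p.2 ∉ u.bind v := hl p hp
      rw [mem_ubind] at h1
      exact (Ultrafilter.compl_mem_iff_notMem).2 h1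
  set upd : List (ℕ × Set ℕ) → ℕ → List (ℕ × Set ℕ) := fun l m => l ++ [(m, mkQ u v l m)]
    with hupd_def
  have hupd : ∀ l m, Inv l → m ∈ cand l → Inv (upd l m) := by
    intro l m hl hm p hp
    rcases List.mem_append.1 hp with h | h
    · exact hl p h
    · have : p = (m, mkQ u v l m) := List.mem_singleton.1 h
      rw [this]
      exact (mkQ_spec u v hm.1.1.2 hm.1.2).2.1
  obtain ⟨σ, t, hσ0, hstep⟩ := engine u Inv [] (by intro p hp; simp at hp) cand hcand upd hupd
  -- basic structure facts
  have hσmap : ∀ j, (σ j).map Prod.fst = (List.range j).map t := by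
    intro j
    induction j with
    | zero => rw [hσ0]; simp
    | succ j ih =>
        rw [(hstep j).2.2, hupd_def]
        simp only [List.map_append, List.range_succ, List.map_append, ih]
        simp
  have hentry : ∀ i j, i < j → (t i, mkQ u v (σ i) (t i)) ∈ σ j := by
    intro i j hij
    induction j with
    | zero => omega
    | succ j ih =>
        rw [(hstep j).2.2, hupd_def]
        rcases Nat.lt_succ_iff_lt_or_eq.1 hij with h | h
        · exact List.mem_append.2 (Or.inl (ih h))
        · subst h
          exact List.mem_append.2 (Or.inr (List.mem_singleton.2 rfl))
  set Q : ℕ → Set ℕ := fun j => mkQ u v (σ j) (t j) with hQ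
  have hQmem : ∀ j, Q j ∈ v (t j) := by
    intro j
    exact (mkQ_spec u v (hstep j).2.1.1.1.2 (hstep j).2.1.1.2).1
  have hQdisj0 : ∀ i j, i < j → Q j ∩ Q i = ∅ := by
    intro i j hij
    have h1 : Q j ∩ uold (σ j) = ∅ := (mkQ_spec u v (hstep j).2.1.1.1.2 (hstep j).2.1.1.2).2.2
    have h2 : Q i ⊆ uold (σ j) := by
      intro x hx
      exact ⟨(t i, Q i), hentry i j hij, hx⟩
    rw [Set.eq_empty_iff_forall_notMem] at h1 ⊢
    intro x hx
    exact h1 x ⟨hx.1, h2 hx.2⟩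
  have hmono : StrictMono t := by
    intro i j hij
    have : t i ∈ (σ j).map Prod.fst := by
      rw [hσmap j]
      exact List.mem_map.2 ⟨i, List.mem_range.2 hij, rfl⟩
    exact ((hstep j).2.1).2 (t i) this
  refine ⟨t, hmono, ?_, Q, ?_, hQmem⟩
  · intro j
    have := (hstep j).2.1.1.1.1.1
    rwa [hσmap j] at this
  · intro i j hij
    rcases lt_or_gt_of_ne hij with h | h
    · rw [Set.inter_comm]; exact hQdisj0 i j h
    · exact hQdisj0 j i h

open Set

-- (IsFree already defined)










section DoubleSeq

variable (u : Ultrafilter ℕ) (z : ℕ → ℕ → Ultrafilter ℕ)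

noncomputable def mysep (w w' : Ultrafilter ℕ) : Set ℕ :=
  open scoped Classical in if h : w ≠ w' then (umem_diff h).choose else Set.univ

lemma mysep_mem {w w' : Ultrafilter ℕ} (h : w ≠ w') : mysep w w' ∈ w := by
  rw [mysep]; rw [dif_pos h]; exact (umem_diff h).choose_spec.1

lemma mysep_not_mem {w w' : Ultrafilter ℕ} (h : w ≠ w') : mysep w w' ∉ w' := by
  rw [mysep]; rw [dif_pos h]; exact (umem_diff h).choose_spec.2

noncomputable def paircore (a a' m : ℕ) : Set ℕ :=
  if a < a' then mysep (z a m) (z a' m) else (mysep (z a' m) (z a m))ᶜ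

lemma paircore_mem {a a' m : ℕ} (hne : z a m ≠ z a' m) : paircore z a a' m ∈ z a m := by
  rw [paircore]
  by_cases h : a < a'
  · rw [if_pos h]; exact mysep_mem hne
  · rw [if_neg h]
    exact (Ultrafilter.compl_mem_iff_notMem).2 (mysep_not_mem hne.symm)

lemma paircore_disj {a a' m : ℕ} (haa : a ≠ a') :
    paircore z a a' m ∩ paircore z a' a m = ∅ := by
  rcases lt_or_gt_of_ne haa with h | h
  · rw [paircore, paircore, if_pos h, if_neg (by omega)]
    exact Set.inter_compl_self _
  · rw [paircore, paircore, if_neg (by omega), if_pos h]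
    exact Set.compl_inter_self _

def uold2 (L : List (Set ℕ)) : Set ℕ := {x | ∃ s ∈ L, x ∈ s}

lemma uold2_not_mem {w : Ultrafilter ℕ} {L : List (Set ℕ)} (h : ∀ s ∈ L, s ∉ w) :
    uold2 L ∉ w := by
  have : {x | ∀ s ∈ L, x ∉ s} ∈ w := list_forall_mem L (fun s x => x ∉ s)
    (fun s hs => (Ultrafilter.compl_mem_iff_notMem).2 (h s hs))
  apply not_mem_of_disjoint this
  ext x
  simp only [uold2, Set.mem_inter_iff, Set.mem_setOf_eq, Set.mem_empty_iff_false, iff_false]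
  rintro ⟨⟨s, hs, hx⟩, hall⟩
  exact hall s hs hx

/-- the sequence of row limits along `u` -/
noncomputable def xsq (n : ℕ) : Ultrafilter ℕ := u.bind (z n)

/-- the double limit along `u` -/
noncomputable def ubX : Ultrafilter ℕ := u.bind (xsq u z)

/-- a new piece for row `a`, column `m`, given history `l` and old-pieces-union `O`. -/
noncomputable def mkP0 (l : List ℕ) (O : Set ℕ) (m a : ℕ) : Set ℕ :=
  {x | ∀ a' ∈ l, a' ≠ a → x ∈ paircore z a a' m} ∩ Oᶜ ∩ (mysep (ubX u z) (z a m))ᶜ ∩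
    (mysep (xsq u z m) (z a m))ᶜ ∩ {x | ∀ b ∈ l, x ∉ mysep (xsq u z b) (z a m)}

lemma mkP0_spec (l : List ℕ) (O : Set ℕ) (m a : ℕ)
    (hO : O ∉ z a m) (hX : z a m ≠ ubX u z) (hbs : ∀ b ∈ l, z a m ≠ xsq u z b)
    (hm : z a m ≠ xsq u z m) (hdista : ∀ b ∈ l, b ≠ a → z a m ≠ z b m) :
    mkP0 u z l O m a ∈ z a m ∧ mkP0 u z l O m a ∩ O = ∅ ∧
      (∀ b ∈ l, mkP0 u z l O m a ∉ xsq u z b) ∧ mkP0 u z l O m a ∉ ubX u z ∧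
      mkP0 u z l O m a ∉ xsq u z m ∧
      (∀ a' ∈ l, a' ≠ a → a ∈ l → mkP0 u z l O m a ∩ mkP0 u z l O m a' = ∅) := by
  have hmem : mkP0 u z l O m a ∈ z a m := by
    refine Filter.inter_mem (Filter.inter_mem (Filter.inter_mem (Filter.inter_mem ?_ ?_) ?_) ?_) ?_
    · refine list_forall_mem l (fun a' x => a' ≠ a → x ∈ paircore z a a' m) ?_
      intro a' ha'
      by_cases h : a' = a
      · exact memU_mono Filter.univ_mem (by intro x _ hc; exact absurd h hc)
      · exact memU_mono (paircore_mem z (hdista a' ha' h)) (fun x hx _ => hx)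
    · exact (Ultrafilter.compl_mem_iff_notMem).2 hO
    · exact (Ultrafilter.compl_mem_iff_notMem).2 (mysep_not_mem hX.symm)
    · exact (Ultrafilter.compl_mem_iff_notMem).2 (mysep_not_mem hm.symm)
    · refine list_forall_mem l (fun b x => x ∉ mysep (xsq u z b) (z a m)) ?_
      intro b hb
      exact (Ultrafilter.compl_mem_iff_notMem).2 (mysep_not_mem (hbs b hb).symm)
  refine ⟨hmem, ?_, ?_, ?_, ?_, ?_⟩
  · exact Set.eq_empty_iff_forall_notMem.2 (fun x hx => hx.1.1.1.1.2 hx.2)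
  · intro b hb
    apply not_mem_of_disjoint (mysep_mem (show xsq u z b ≠ z a m from (hbs b hb).symm))
    exact Set.eq_empty_iff_forall_notMem.2 (fun x hx => hx.1.2 b hb hx.2)
  · apply not_mem_of_disjoint (mysep_mem (show ubX u z ≠ z a m from hX.symm))
    exact Set.eq_empty_iff_forall_notMem.2 (fun x hx => hx.1.1.1.2 hx.2)
  · apply not_mem_of_disjoint (mysep_mem (show xsq u z m ≠ z a m from hm.symm))
    exact Set.eq_empty_iff_forall_notMem.2 (fun x hx => hx.1.1.2 hx.2)
  · intro a' ha' hne hal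
    have hd := paircore_disj z (show a ≠ a' from fun h => hne h.symm) (m := m)
    refine Set.eq_empty_iff_forall_notMem.2 (fun x hx => ?_)
    have hx1 : x ∈ paircore z a a' m := hx.1.1.1.1.1 a' ha' hne
    have hx2 : x ∈ paircore z a' a m := hx.2.1.1.1.1 a hal (fun h => hne h.symm)
    have hmem2 : x ∈ paircore z a a' m ∩ paircore z a' a m := ⟨hx1, hx2⟩
    rw [hd] at hmem2
    exact hmem2

/-- all pieces created during the first `k` steps of history `l` -/
noncomputable def PLn : ℕ → List ℕ → List (Set ℕ)
  | 0, _ => []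
  | (k+1), l => PLn k l ++ (l.take k).map (fun a => mkP0 u z (l.take k)
      (uold2 (PLn k l)) (l.getD k 0) a)

noncomputable def PL (l : List ℕ) : List (Set ℕ) := PLn u z l.length l

lemma PLn_append (k : ℕ) (l l₂ : List ℕ) (hk : k ≤ l.length) :
    PLn u z k (l ++ l₂) = PLn u z k l := by
  induction k with
  | zero => rfl
  | succ k ih =>
      have hk' : k ≤ l.length := Nat.le_of_succ_le hk
      rw [PLn, PLn, ih hk']
      have h1 : (l ++ l₂).take k = l.take k := List.take_append_of_le_length hk'
      have h2 : (l ++ l₂).getD k 0 = l.getD k 0 :=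
        List.getD_append l l₂ 0 k (by omega)
      rw [h1, h2]

lemma PL_snoc (l : List ℕ) (m : ℕ) :
    PL u z (l ++ [m]) = PL u z l ++ l.map (fun a => mkP0 u z l (uold2 (PL u z l)) m a) := by
  have hlen : (l ++ [m]).length = l.length + 1 := by simp
  rw [PL, hlen, PLn]
  have h0 : PLn u z l.length (l ++ [m]) = PLn u z l.length l := PLn_append u z _ l [m] le_rfl
  have h1 : (l ++ [m]).take l.length = l := by
    rw [List.take_append_of_le_length le_rfl, List.take_length]
  have h2 : (l ++ [m]).getD l.length 0 = m := by
    rw [List.getD_append_right l [m] 0 l.length le_rfl]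
    simp
  rw [h0, h1, h2, PL]

lemma PLn_mem_stage (k k' : ℕ) (l : List ℕ) (hk : k < k') (s : Set ℕ)
    (hs : s ∈ (l.take k).map (fun a => mkP0 u z (l.take k) (uold2 (PLn u z k l)) (l.getD k 0) a)) :
    s ∈ PLn u z k' l := by
  induction k' with
  | zero => omega
  | succ k' ih =>
      rw [PLn]
      rcases Nat.lt_succ_iff_lt_or_eq.1 hk with h | h
      · exact List.mem_append.2 (Or.inl (ih h))
      · subst h
        exact List.mem_append.2 (Or.inr hs)


theorem double_seq (hfree : IsFree u) (N' : Set ℕ) (hN' : N' ∈ u)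
    (E : ℕ → Set ℕ) (hE : ∀ n ∈ N', E n ∈ u) (hEinj : ∀ n ∈ N', Set.InjOn (z n) (E n))
    (hdist : ∀ n ∈ N', ∀ n' ∈ N', n ≠ n' → {m | z n m ≠ z n' m} ∈ u)
    (hself : ∀ n ∈ N', {m | z n m ≠ xsq u z m} ∈ u) :
    ∃ t : ℕ → ℕ, StrictMono t ∧ ∃ P : ℕ → ℕ → Set ℕ,
      (∀ i j, i < j → P i j ∈ z (t i) (t j)) ∧
      (∀ i j i' j', i < j → i' < j' → (i, j) ≠ (i', j') → P i j ∩ P i' j' = ∅) := by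
  classical
  set Inv : List ℕ → Prop := fun l => (∀ a ∈ l, a ∈ N') ∧
    ∀ s ∈ PL u z l, (∀ a ∈ l, s ∉ xsq u z a) ∧ s ∉ ubX u z with hInv
  set cand : List ℕ → Set ℕ := fun l =>
    {m | (m ∈ N') ∧ (∀ a ∈ l, m ∈ E a) ∧ (∀ a ∈ l, uold2 (PL u z l) ∉ z a m) ∧
      (∀ a ∈ l, ∀ b ∈ l, z a m ≠ xsq u z b) ∧ (∀ a ∈ l, z a m ≠ ubX u z) ∧
      (∀ a ∈ l, z a m ≠ xsq u z m) ∧ (∀ a ∈ l, ∀ b ∈ l, a ≠ b → z a m ≠ z b m) ∧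
      (∀ s ∈ PL u z l, s ∉ xsq u z m) ∧ (∀ a ∈ l, a < m)} with hcand_def
  have hcand : ∀ l, Inv l → cand l ∈ u := by
    intro l hl
    have h1 : {m | ∀ a ∈ l, m ∈ E a} ∈ u :=
      list_forall_mem l (fun a m => m ∈ E a) (fun a ha => hE a (hl.1 a ha))
    have h2 : {m | ∀ a ∈ l, uold2 (PL u z l) ∉ z a m} ∈ u := by
      refine list_forall_mem l (fun a m => uold2 (PL u z l) ∉ z a m) ?_
      intro a ha
      have hnot : uold2 (PL u z l) ∉ xsq u z a :=
        uold2_not_mem (fun s hs => (hl.2 s hs).1 a ha)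
      have hnot2 : {m | uold2 (PL u z l) ∈ z a m} ∉ u := fun hmem => hnot (mem_ubind.2 hmem)
      exact (Ultrafilter.compl_mem_iff_notMem).2 hnot2
    have h3 : {m | ∀ a ∈ l, ∀ b ∈ l, z a m ≠ xsq u z b} ∈ u := by
      refine list_forall_mem l (fun a m => ∀ b ∈ l, z a m ≠ xsq u z b) ?_
      intro a ha
      refine list_forall_mem l (fun b m => z a m ≠ xsq u z b) ?_
      intro b _
      exact ne_mem_of_injOn hfree (hE a (hl.1 a ha)) (hEinj a (hl.1 a ha)) (xsq u z b)
    have h4 : {m | ∀ a ∈ l, z a m ≠ ubX u z} ∈ u := by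
      refine list_forall_mem l (fun a m => z a m ≠ ubX u z) ?_
      intro a ha
      exact ne_mem_of_injOn hfree (hE a (hl.1 a ha)) (hEinj a (hl.1 a ha)) (ubX u z)
    have h5 : {m | ∀ a ∈ l, z a m ≠ xsq u z m} ∈ u :=
      list_forall_mem l (fun a m => z a m ≠ xsq u z m) (fun a ha => hself a (hl.1 a ha))
    have h6 : {m | ∀ a ∈ l, ∀ b ∈ l, a ≠ b → z a m ≠ z b m} ∈ u := by
      refine list_forall_mem l (fun a m => ∀ b ∈ l, a ≠ b → z a m ≠ z b m) ?_
      intro a ha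
      refine list_forall_mem l (fun b m => a ≠ b → z a m ≠ z b m) ?_
      intro b hb
      by_cases hab : a = b
      · exact memU_mono Filter.univ_mem (fun m _ hc => absurd hab hc)
      · exact memU_mono (hdist a (hl.1 a ha) b (hl.1 b hb) hab) (fun m hm _ => hm)
    have h7 : {m | ∀ s ∈ PL u z l, s ∉ xsq u z m} ∈ u := by
      refine list_forall_mem (PL u z l) (fun s m => s ∉ xsq u z m) ?_
      intro s hs
      have hnot : s ∉ ubX u z := (hl.2 s hs).2
      have hnot2 : {m | s ∈ xsq u z m} ∉ u := fun hmem => hnot (mem_ubind.2 hmem)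
      exact (Ultrafilter.compl_mem_iff_notMem).2 hnot2
    have h8 : {m | ∀ a ∈ l, a < m} ∈ u := list_gt_mem hfree l
    have hbig := Filter.inter_mem (Filter.inter_mem (Filter.inter_mem (Filter.inter_mem
      (Filter.inter_mem (Filter.inter_mem (Filter.inter_mem (Filter.inter_mem hN' h1) h2)
        h3) h4) h5) h6) h7) h8
    refine memU_mono hbig ?_
    rintro m ⟨⟨⟨⟨⟨⟨⟨⟨c0, c1⟩, c2⟩, c3⟩, c4⟩, c5⟩, c6⟩, c7⟩, c8⟩
    exact ⟨c0, c1, c2, c3, c4, c5, c6, c7, c8⟩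
  set upd : List ℕ → ℕ → List ℕ := fun l m => l ++ [m] with hupd_def
  have hupd : ∀ l m, Inv l → m ∈ cand l → Inv (upd l m) := by
    intro l m hl hm
    obtain ⟨c0, c1, c2, c3, c4, c5, c6, c7, c8⟩ := hm
    constructor
    · intro a ha
      rcases List.mem_append.1 ha with h | h
      · exact hl.1 a h
      · rw [List.mem_singleton.1 h]; exact c0
    · intro s hs
      rw [PL_snoc] at hs
      rcases List.mem_append.1 hs with h | h
      · refine ⟨?_, (hl.2 s h).2⟩
        intro a ha
        rcases List.mem_append.1 ha with h' | h'
        · exact (hl.2 s h).1 a h'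
        · rw [List.mem_singleton.1 h']
          exact c7 s h
      · obtain ⟨a₀, ha₀, rfl⟩ := List.mem_map.1 h
        have hspec := mkP0_spec u z l (uold2 (PL u z l)) m a₀ (c2 a₀ ha₀) (c4 a₀ ha₀)
          (c3 a₀ ha₀) (c5 a₀ ha₀) (fun b hb hba => c6 a₀ ha₀ b hb (Ne.symm hba))
        refine ⟨?_, hspec.2.2.2.1⟩
        intro a ha
        rcases List.mem_append.1 ha with h' | h'
        · exact hspec.2.2.1 a h'
        · rw [List.mem_singleton.1 h']
          exact hspec.2.2.2.2.1
  have hInvNil : Inv [] := by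
    constructor
    · intro a ha; exact absurd ha List.not_mem_nil
    · intro s hs
      have : PL u z [] = [] := rfl
      rw [this] at hs
      exact absurd hs List.not_mem_nil
  obtain ⟨σ, t, hσ0, hstep⟩ := engine u Inv [] hInvNil cand hcand upd hupd
  have hσ : ∀ j, σ j = (List.range j).map t := by
    intro j
    induction j with
    | zero => rw [hσ0]; simp
    | succ j ih =>
        rw [(hstep j).2.2, hupd_def, ih, List.range_succ]
        simp
  have hlen : ∀ j, (σ j).length = j := by intro j; rw [hσ j]; simp
  have hmemσ : ∀ i j, i < j → t i ∈ σ j := by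
    intro i j hij
    rw [hσ j]
    exact List.mem_map.2 ⟨i, List.mem_range.2 hij, rfl⟩
  have hmono : StrictMono t := by
    intro i j hij
    exact (hstep j).2.1.2.2.2.2.2.2.2.2 (t i) (hmemσ i j hij)
  have hpre : ∀ j j', j ≤ j' → ∃ r, σ j' = σ j ++ r := by
    intro j j' hjj'
    induction j' with
    | zero =>
        have : j = 0 := by omega
        exact ⟨[], by rw [this]; simp⟩
    | succ j' ih =>
        by_cases h : j ≤ j'
        · obtain ⟨r, hr⟩ := ih h
          exact ⟨r ++ [t j'], by rw [(hstep j').2.2, hupd_def, hr]; simp⟩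
        · have : j = j' + 1 := by omega
          exact ⟨[], by rw [this]; simp⟩
  set P : ℕ → ℕ → Set ℕ := fun i j => mkP0 u z (σ j) (uold2 (PL u z (σ j))) (t j) (t i)
    with hP
  have hspec : ∀ i j, i < j →
      P i j ∈ z (t i) (t j) ∧ P i j ∩ uold2 (PL u z (σ j)) = ∅ ∧
      (∀ b ∈ σ j, P i j ∉ xsq u z b) ∧ P i j ∉ ubX u z ∧ P i j ∉ xsq u z (t j) ∧
      (∀ a' ∈ σ j, a' ≠ t i → t i ∈ σ j → P i j ∩ mkP0 u z (σ j) (uold2 (PL u z (σ j))) (t j) a' = ∅) := by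
    intro i j hij
    obtain ⟨c0, c1, c2, c3, c4, c5, c6, c7, c8⟩ := (hstep j).2.1
    exact mkP0_spec u z (σ j) (uold2 (PL u z (σ j))) (t j) (t i) (c2 (t i) (hmemσ i j hij))
      (c4 (t i) (hmemσ i j hij)) (c3 (t i) (hmemσ i j hij)) (c5 (t i) (hmemσ i j hij))
      (fun b hb hba => c6 (t i) (hmemσ i j hij) b hb (Ne.symm hba))
  -- a piece created at step j occurs in the piece list of any later stage
  have hPL_mem : ∀ i j j', i < j → j < j' → P i j ∈ PL u z (σ j') := by
    intro i j j' hij hjj'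
    have htake : (σ j').take j = σ j := by
      have hmin : min j j' = j := by omega
      rw [hσ j', ← List.map_take, List.take_range, hσ j, hmin]
    have hgetD : (σ j').getD j 0 = t j := by
      obtain ⟨r, hr⟩ := hpre (j+1) j' (by omega)
      rw [hr, List.getD_append _ _ 0 j (by rw [hlen]; omega)]
      rw [(hstep j).2.2, hupd_def]
      rw [List.getD_append_right (σ j) [t j] 0 j (by rw [hlen])]
      rw [hlen]
      simp
    have hPLn : PLn u z j (σ j') = PL u z (σ j) := by
      obtain ⟨r, hr⟩ := hpre j j' (by omega)
      rw [hr, PLn_append u z j (σ j) r (by rw [hlen]), PL, hlen]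
    have : P i j ∈ ((σ j').take j).map
        (fun a => mkP0 u z ((σ j').take j) (uold2 (PLn u z j (σ j'))) ((σ j').getD j 0) a) := by
      rw [htake, hgetD, hPLn]
      exact List.mem_map.2 ⟨t i, hmemσ i j hij, rfl⟩
    have := PLn_mem_stage u z j j' (σ j') hjj' _ this
    rw [PL, hlen]
    exact this
  have hcross : ∀ i j i' j', i < j → i' < j' → j < j' → P i j ∩ P i' j' = ∅ := by
    intro i j i' j' hij hi'j' hjj'
    refine Set.eq_empty_iff_forall_notMem.2 (fun x hx => ?_)
    have h1 : x ∈ uold2 (PL u z (σ j')) := ⟨P i j, hPL_mem i j j' hij hjj', hx.1⟩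
    have h2 := (hspec i' j' hi'j').2.1
    rw [Set.eq_empty_iff_forall_notMem] at h2
    exact h2 x ⟨hx.2, h1⟩
  refine ⟨t, hmono, P, fun i j hij => (hspec i j hij).1, ?_⟩
  intro i j i' j' hij hi'j' hne
  rcases lt_trichotomy j j' with h | h | h
  · exact hcross i j i' j' hij hi'j' h
  · subst h
    have hii' : i ≠ i' := by
      intro hc
      exact hne (by rw [hc])
    have := (hspec i j hij).2.2.2.2.2 (t i') (hmemσ i' j hi'j')
      (fun hc => hii' (hmono.injective hc).symm) (hmemσ i j hij)
    exact this
  · rw [Set.inter_comm]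
    exact hcross i' j' i j hi'j' hij h

end DoubleSeq

section MoreHelpers

lemma bind_eq_const {p : Ultrafilter ℕ} {z : ℕ → Ultrafilter ℕ} {c : Ultrafilter ℕ}
    (h : {m | z m = c} ∈ p) : p.bind z = c := by
  rw [ubind_congr (z' := fun _ => c) h, ubind_const]

lemma tail_mem (t : ℕ → ℕ) (hmono : StrictMono t) {q : Ultrafilter ℕ} (hfree : IsFree q)
    (hT : Set.range t ∈ q) (i : ℕ) : {m | ∃ j, i < j ∧ t j = m} ∈ q := by
  have hF : (t '' Set.Iic i).Finite := (Set.finite_Iic i).image t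
  refine memU_mono (hfree.diff_finite_mem hT hF) ?_
  rintro m ⟨⟨j, rfl⟩, hm2⟩
  refine ⟨j, ?_, rfl⟩
  by_contra h
  exact hm2 ⟨j, by simp only [Set.mem_Iic]; omega, rfl⟩

lemma simple_rec (u : Ultrafilter ℕ) (hfree : IsFree u) (EXTRA : List ℕ → Set ℕ)
    (hEXTRA : ∀ l, EXTRA l ∈ u) :
    ∃ t : ℕ → ℕ, StrictMono t ∧ ∀ j, t j ∈ EXTRA ((List.range j).map t) := by
  obtain ⟨σ, t, hσ0, hstep⟩ := engine u (fun _ : List ℕ => True) [] trivial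
    (fun l => EXTRA l ∩ {m | ∀ a ∈ l, a < m})
    (fun l _ => Filter.inter_mem (hEXTRA l) (list_gt_mem hfree l))
    (fun l m => l ++ [m]) (fun _ _ _ _ => trivial)
  have hσ : ∀ j, σ j = (List.range j).map t := by
    intro j
    induction j with
    | zero => rw [hσ0]; simp
    | succ j ih => rw [(hstep j).2.2, ih, List.range_succ]; simp
  have hmono : StrictMono t := by
    intro i j hij
    have := ((hstep j).2.1).2 (t i)
    rw [hσ j] at this
    exact this (List.mem_map.2 ⟨i, List.mem_range.2 hij, rfl⟩)
  refine ⟨t, hmono, fun j => ?_⟩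
  have := ((hstep j).2.1).1
  rwa [hσ j] at this

end MoreHelpers


/-- If there are more Ramsey ultrafilters than points of `A`, then `βω \ A` is
doubly countably compact. -/
theorem compl_small_doubly_countably_compact (R : Set (Ultrafilter ℕ))
    (hR : ∀ u ∈ R, IsRamsey u) (A : Set (Ultrafilter ℕ))
    (hA : Cardinal.mk A < Cardinal.mk R) :
    DoublyCountablyCompact ↥(Aᶜ) := by
  classical
  intro f
  have hRne : R.Nonempty := by
    by_contra h
    rw [Set.not_nonempty_iff_eq_empty] at h
    subst h
    simp at hA
  obtain ⟨u, huR⟩ := hRne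
  have hRam := hR u huR
  have hufree : IsFree u := hRam.1
  set zz : ℕ → ℕ → Ultrafilter ℕ := fun n m => ((f n m : Ultrafilter ℕ)) with hzzdef
  have hzzA : ∀ n m, zz n m ∉ A := fun n m => (f n m).2
  have hΛ : Cardinal.mk ↥A < Cardinal.mk (Set (Set ℕ)) := by
    have i1 : Cardinal.mk ↥R ≤ Cardinal.mk (Ultrafilter ℕ) := Cardinal.mk_subtype_le _
    have i2 : Cardinal.mk (Ultrafilter ℕ) ≤ Cardinal.mk (Set (Set ℕ)) := by
      refine Cardinal.mk_le_of_injective (f := fun p : Ultrafilter ℕ => {s : Set ℕ | s ∈ p}) ?_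
      intro p q h
      exact Ultrafilter.eq_of_le (f := p) (g := q) (fun s hs => (Set.ext_iff.1 h s).2 hs)
    exact lt_of_lt_of_le hA (i1.trans i2)
  suffices hGOOD : ∃ p : Ultrafilter ℕ, IsFree p ∧ ∃ T₀, T₀ ∈ p ∧
      (∀ n ∈ T₀, p.bind (zz n) ∉ A) ∧ p.bind (fun n => p.bind (zz n)) ∉ A by
    obtain ⟨p, h1, T₀, h2, h3, h4⟩ := hGOOD
    exact assemble A f p h1 T₀ h2 h3 h4
  set Nc : Set ℕ := {n | ∃ c, {m | zz n m = c} ∈ u} with hNcdef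
  set cc : ℕ → Ultrafilter ℕ := fun n => if h : n ∈ Nc then h.choose else u with hccdef
  have hcc : ∀ n ∈ Nc, {m | zz n m = cc n} ∈ u := by
    intro n hn
    show {m | zz n m = (if h : n ∈ Nc then h.choose else u)} ∈ u
    rw [dif_pos hn]
    exact hn.choose_spec
  have hccA : ∀ n ∈ Nc, cc n ∉ A := by
    intro n hn
    obtain ⟨m, hm⟩ := Ultrafilter.nonempty_of_mem (hcc n hn)
    have : zz n m = cc n := hm
    rw [← this]
    exact hzzA n m
  have hEEall : ∀ n, ∃ E, n ∉ Nc → (E ∈ u ∧ Set.InjOn (zz n) E) := by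
    intro n
    by_cases h : n ∈ Nc
    · exact ⟨Set.univ, fun hc => absurd h hc⟩
    · rcases ramsey_dichotomy hRam (zz n) with ⟨c, hc⟩ | ⟨E, hEu, hEinj⟩
      · exact absurd ⟨c, hc⟩ h
      · exact ⟨E, fun _ => ⟨hEu, hEinj⟩⟩
  choose EE hEE using hEEall
  by_cases hNc : Nc ∈ u
  · -- CASE A : u-many rows are constant along u
    rcases ramsey_dichotomy hRam cc with ⟨cstar, hcst⟩ | ⟨Ec, hEc, hEcinj⟩
    · -- A-const : the constants stabilize
      obtain ⟨t, hmono, hEX⟩ := simple_rec u hufree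
        (fun l => (Nc ∩ {n | cc n = cstar}) ∩ {m | ∀ a ∈ l, a ∈ Nc → zz a m = cc a})
        (by
          intro l
          refine Filter.inter_mem (Filter.inter_mem hNc hcst) ?_
          refine list_forall_mem l (fun a m => a ∈ Nc → zz a m = cc a) ?_
          intro a _
          by_cases h : a ∈ Nc
          · exact memU_mono (hcc a h) (fun m hm _ => hm)
          · exact memU_mono Filter.univ_mem (fun m _ hc => absurd hc h))
      have hTinf : (Set.range t).Infinite := Set.infinite_range_of_injective hmono.injective
      obtain ⟨G, _, hGs⟩ := pool_large (Set.range t) hTinf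
      obtain ⟨hqfree, hqT⟩ := hGs (fun _ => true)
      set q := G (fun _ => true) with hqdef
      have hrowc : ∀ i, q.bind (zz (t i)) = cc (t i) := by
        intro i
        apply bind_eq_const
        refine memU_mono (tail_mem t hmono hqfree hqT i) ?_
        rintro m ⟨j, hij, rfl⟩
        exact (hEX j).2 (t i) (List.mem_map.2 ⟨i, List.mem_range.2 hij, rfl⟩) (hEX i).1.1
      refine ⟨q, hqfree, Set.range t, hqT, ?_, ?_⟩
      · rintro n ⟨i, rfl⟩
        rw [hrowc i]
        exact hccA (t i) (hEX i).1.1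
      · have hagree : {n | q.bind (zz n) = cstar} ∈ q := by
          refine memU_mono hqT ?_
          rintro n ⟨i, rfl⟩
          show q.bind (zz (t i)) = cstar
          rw [hrowc i]
          exact (hEX i).1.2
        rw [bind_eq_const hagree]
        have h0 : cc (t 0) = cstar := (hEX 0).1.2
        rw [← h0]
        exact hccA (t 0) (hEX 0).1.1
    · -- A-inj : the constants are injective along u
      obtain ⟨t, hmono, hEX, Q, hQdisj, hQmem⟩ := single_seq u cc hufree Ec hEc hEcinj
        (fun l => Nc ∩ {m | ∀ a ∈ l, a ∈ Nc → zz a m = cc a})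
        (by
          intro l
          refine Filter.inter_mem hNc ?_
          refine list_forall_mem l (fun a m => a ∈ Nc → zz a m = cc a) ?_
          intro a _
          by_cases h : a ∈ Nc
          · exact memU_mono (hcc a h) (fun m hm _ => hm)
          · exact memU_mono Filter.univ_mem (fun m _ hc => absurd hc h))
      have hTinf : (Set.range t).Infinite := Set.infinite_range_of_injective hmono.injective
      have hrowc : ∀ (q : Pool (Set.range t)) i, q.1.bind (zz (t i)) = cc (t i) := by
        intro q i
        apply bind_eq_const
        refine memU_mono (tail_mem t hmono q.2.1 q.2.2 i) ?_
        rintro m ⟨j, hij, rfl⟩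
        exact (hEX j).2 (t i) (List.mem_map.2 ⟨i, List.mem_range.2 hij, rfl⟩) (hEX i).1
      set e : Unit → Pool (Set.range t) → Ultrafilter ℕ :=
        fun _ q => q.1.bind (fun n => q.1.bind (zz n)) with hedef
      have hinj : ∀ k, Function.Injective (e k) := by
        intro k
        refine eval_injective (Set.range t) t hmono (e k) Q hQdisj ?_
        intro q V hV
        show (⋃ j ∈ {j | t j ∈ V}, Q j) ∈ q.1.bind (fun n => q.1.bind (zz n))
        rw [mem_ubind]
        refine memU_mono (Filter.inter_mem hV q.2.2) ?_
        rintro n ⟨hnV, i, rfl⟩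
        show (⋃ j ∈ {j | t j ∈ V}, Q j) ∈ q.1.bind (zz (t i))
        rw [hrowc q i]
        exact memU_mono (hQmem i) (Set.subset_biUnion_of_mem (u := fun j => Q j) hnV)
      obtain ⟨q, hq⟩ := exists_good_pool (Set.range t) hTinf A hΛ e hinj
      refine ⟨q.1, q.2.1, Set.range t, q.2.2, ?_, ?_⟩
      · rintro n ⟨i, rfl⟩
        rw [hrowc q i]
        exact hccA (t i) (hEX i).1
      · exact hq ()
  · -- CASE B : u-many rows are injective along u
    have hNic : Ncᶜ ∈ u := (Ultrafilter.compl_mem_iff_notMem).2 hNc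
    set req : ℕ → ℕ → Prop := fun n n' => {m | zz n m = zz n' m} ∈ u with hreqdef
    have hreq_refl : ∀ n, req n n := by
      intro n
      have : {m | zz n m = zz n m} = Set.univ := by ext m; simp
      show {m | zz n m = zz n m} ∈ u
      rw [this]
      exact Filter.univ_mem
    have hreq_symm : ∀ {n n'}, req n n' → req n' n := by
      intro n n' h
      exact memU_mono h (fun m hm => hm.symm)
    have hreq_trans : ∀ {a b c}, req a b → req b c → req a c := by
      intro a b c h1 h2
      refine memU_mono (Filter.inter_mem h1 h2) ?_
      rintro m ⟨x1, x2⟩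
      exact x1.trans x2
    set gq : ℕ → Set ℕ := fun n => {n' | req n n'} with hgqdef
    have hgq_iff : ∀ n n', gq n = gq n' ↔ req n n' := by
      intro n n'
      constructor
      · intro h
        have : n' ∈ gq n' := hreq_refl n'
        rw [← h] at this
        exact this
      · intro h
        ext x
        constructor
        · intro hx; exact hreq_trans (hreq_symm h) hx
        · intro hx; exact hreq_trans h hx
    rcases ramsey_dichotomy hRam gq with ⟨C0, hC0⟩ | ⟨Es, hEs, hEsinj⟩
    · -- CASE B0' : u-many rows pairwise u-equivalent
      obtain ⟨n₀, hn₀⟩ := Ultrafilter.nonempty_of_mem (Filter.inter_mem hC0 hNic)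
      have hn₀W : gq n₀ = C0 := hn₀.1
      have hn₀N : n₀ ∉ Nc := hn₀.2
      have hW : ∀ n, gq n = C0 → req n n₀ := by
        intro n hn
        have : gq n = gq n₀ := by rw [hn, hn₀W]
        exact (hgq_iff n n₀).1 this
      obtain ⟨t, hmono, hEX, Q, hQdisj, hQmem⟩ := single_seq u (zz n₀) hufree (EE n₀)
        (hEE n₀ hn₀N).1 (hEE n₀ hn₀N).2
        (fun l => {n | gq n = C0} ∩ {m | ∀ a ∈ l, gq a = C0 → zz a m = zz n₀ m})
        (by
          intro l
          refine Filter.inter_mem hC0 ?_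
          refine list_forall_mem l (fun a m => gq a = C0 → zz a m = zz n₀ m) ?_
          intro a _
          by_cases h : gq a = C0
          · exact memU_mono (hW a h) (fun m hm _ => hm)
          · exact memU_mono Filter.univ_mem (fun m _ hc => absurd hc h))
      have hTinf : (Set.range t).Infinite := Set.infinite_range_of_injective hmono.injective
      have hrowc : ∀ (q : Pool (Set.range t)) i, q.1.bind (zz (t i)) = q.1.bind (zz n₀) := by
        intro q i
        apply ubind_congr
        refine memU_mono (tail_mem t hmono q.2.1 q.2.2 i) ?_
        rintro m ⟨j, hij, rfl⟩
        exact (hEX j).2 (t i) (List.mem_map.2 ⟨i, List.mem_range.2 hij, rfl⟩) (hEX i).1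
      set e : Unit → Pool (Set.range t) → Ultrafilter ℕ := fun _ q => q.1.bind (zz n₀)
        with hedef
      have hinj : ∀ k, Function.Injective (e k) := by
        intro k
        refine eval_injective (Set.range t) t hmono (e k) Q hQdisj ?_
        intro q V hV
        show (⋃ j ∈ {j | t j ∈ V}, Q j) ∈ q.1.bind (zz n₀)
        rw [mem_ubind]
        refine memU_mono (Filter.inter_mem hV q.2.2) ?_
        rintro m ⟨hnV, j, rfl⟩
        exact memU_mono (hQmem j) (Set.subset_biUnion_of_mem (u := fun j => Q j) hnV)
      obtain ⟨q, hq⟩ := exists_good_pool (Set.range t) hTinf A hΛ e hinj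
      refine ⟨q.1, q.2.1, Set.range t, q.2.2, ?_, ?_⟩
      · rintro n ⟨i, rfl⟩
        rw [hrowc q i]
        exact hq ()
      · have hagree : {n | q.1.bind (zz n) = q.1.bind (zz n₀)} ∈ q.1 := by
          refine memU_mono q.2.2 ?_
          rintro n ⟨i, rfl⟩
          exact hrowc q i
        rw [bind_eq_const hagree]
        exact hq ()
    · -- CASE C : u-many rows pairwise u-inequivalent and injective
      have hdist' : ∀ n ∈ Es, ∀ n' ∈ Es, n ≠ n' → {m | zz n m ≠ zz n' m} ∈ u := by
        intro n hn n' hn' hne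
        have hnr : ¬ req n n' := by
          intro hreq
          exact hne (hEsinj hn hn' ((hgq_iff n n').2 hreq))
        exact (Ultrafilter.compl_mem_iff_notMem).2 hnr
      set S1 : Set ℕ := {n | xsq u zz n = ubX u zz} with hS1def
      have hmain : ∀ N' : Set ℕ, N' ∈ u → N' ⊆ Ncᶜ → N' ⊆ Es →
          (∀ n ∈ N', {m | zz n m ≠ xsq u zz m} ∈ u) →
          ∃ p : Ultrafilter ℕ, IsFree p ∧ ∃ T₀, T₀ ∈ p ∧
            (∀ n ∈ T₀, p.bind (zz n) ∉ A) ∧ p.bind (fun n => p.bind (zz n)) ∉ A := by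
        intro N' hN'u hN'Nc hN'Es hself
        obtain ⟨t, hmono, P, hPmem, hPdisj⟩ := double_seq u zz hufree N' hN'u EE
          (fun n hn => (hEE n (hN'Nc hn)).1) (fun n hn => (hEE n (hN'Nc hn)).2)
          (fun n hn n' hn' hne => hdist' n (hN'Es hn) n' (hN'Es hn') hne) hself
        have hTinf : (Set.range t).Infinite := Set.infinite_range_of_injective hmono.injective
        set Qrow : ℕ → ℕ → Set ℕ := fun i j => if i < j then P i j else ∅ with hQrowdef
        set Qtop : ℕ → Set ℕ := fun i => ⋃ j, Qrow i j with hQtopdef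
        set e : Option ℕ → Pool (Set.range t) → Ultrafilter ℕ := fun k q =>
          match k with
          | none => q.1.bind (fun n => q.1.bind (zz n))
          | some i => q.1.bind (zz (t i)) with hedef
        have hrowpat : ∀ (q : Pool (Set.range t)) (i : ℕ) (V : Set ℕ), V ∈ q.1 →
            (⋃ j ∈ {j | t j ∈ V}, Qrow i j) ∈ q.1.bind (zz (t i)) := by
          intro q i V hV
          rw [mem_ubind]
          refine memU_mono (Filter.inter_mem hV (tail_mem t hmono q.2.1 q.2.2 i)) ?_
          rintro m ⟨hmV, j, hij, rfl⟩
          have hQp : Qrow i j = P i j := by rw [hQrowdef]; simp [hij]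
          have hsub : P i j ⊆ ⋃ j' ∈ {j' | t j' ∈ V}, Qrow i j' := by
            intro x hx
            refine Set.mem_biUnion (show t j ∈ V from hmV) ?_
            show x ∈ Qrow i j
            rw [hQp]
            exact hx
          exact memU_mono (hPmem i j hij) hsub
        have hQrow_pos : ∀ i j, i < j → Qrow i j = P i j := by
          intro i j h
          rw [hQrowdef]
          simp [h]
        have hQrow_neg : ∀ i j, ¬ i < j → Qrow i j = ∅ := by
          intro i j h
          rw [hQrowdef]
          simp [h]
        have hQrowdisj : ∀ i, ∀ j j', j ≠ j' → Qrow i j ∩ Qrow i j' = ∅ := by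
          intro i j j' hjj'
          by_cases h1 : i < j
          · by_cases h2 : i < j'
            · rw [hQrow_pos i j h1, hQrow_pos i j' h2]
              exact hPdisj i j i j' h1 h2 (fun hc => hjj' (congrArg Prod.snd hc))
            · rw [hQrow_neg i j' h2]
              simp
          · rw [hQrow_neg i j h1]
            simp
        have hQtopdisj : ∀ i i', i ≠ i' → Qtop i ∩ Qtop i' = ∅ := by
          intro i i' hii'
          refine Set.eq_empty_iff_forall_notMem.2 (fun x hx => ?_)
          have hx1 := hx.1
          have hx2 := hx.2
          rw [hQtopdef] at hx1 hx2
          obtain ⟨j, hj⟩ := Set.mem_iUnion.1 hx1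
          obtain ⟨j', hj'⟩ := Set.mem_iUnion.1 hx2
          by_cases h1 : i < j
          · by_cases h2 : i' < j'
            · rw [hQrow_pos i j h1] at hj
              rw [hQrow_pos i' j' h2] at hj'
              have := hPdisj i j i' j' h1 h2 (fun hc => hii' (congrArg Prod.fst hc))
              rw [Set.eq_empty_iff_forall_notMem] at this
              exact this x ⟨hj, hj'⟩
            · rw [hQrow_neg i' j' h2] at hj'
              exact hj'
          · rw [hQrow_neg i j h1] at hj
            exact hj
        have hinj : ∀ k, Function.Injective (e k) := by
          intro k
          match k with
          | some i =>
            refine eval_injective (Set.range t) t hmono (e (some i)) (Qrow i) (hQrowdisj i) ?_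
            intro q V hV
            exact hrowpat q i V hV
          | none =>
            refine eval_injective (Set.range t) t hmono (e none) Qtop hQtopdisj ?_
            intro q V hV
            show (⋃ i ∈ {i | t i ∈ V}, Qtop i) ∈ q.1.bind (fun n => q.1.bind (zz n))
            rw [mem_ubind]
            refine memU_mono (Filter.inter_mem hV q.2.2) ?_
            rintro n ⟨hnV, i, rfl⟩
            show (⋃ i' ∈ {i' | t i' ∈ V}, Qtop i') ∈ q.1.bind (zz (t i))
            have hsub : (⋃ j ∈ {j | t j ∈ V}, Qrow i j) ⊆ ⋃ i' ∈ {i' | t i' ∈ V}, Qtop i' := by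
              intro x hx
              obtain ⟨j, hjV, hxj⟩ := Set.mem_iUnion₂.1 hx
              exact Set.mem_biUnion hnV (Set.mem_iUnion.2 ⟨j, hxj⟩)
            exact memU_mono (hrowpat q i V hV) hsub
        obtain ⟨q, hq⟩ := exists_good_pool (Set.range t) hTinf A hΛ e hinj
        refine ⟨q.1, q.2.1, Set.range t, q.2.2, ?_, ?_⟩
        · rintro n ⟨i, rfl⟩
          exact hq (some i)
        · exact hq none
      by_cases hS1 : S1 ∈ u
      · refine hmain ((Ncᶜ ∩ Es) ∩ S1) (Filter.inter_mem (Filter.inter_mem hNic hEs) hS1)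
          (fun n hn => hn.1.1) (fun n hn => hn.1.2) ?_
        intro n hn
        have h1 : {m | zz n m ≠ ubX u zz} ∈ u :=
          ne_mem_of_injOn hufree (hEE n hn.1.1).1 (hEE n hn.1.1).2 (ubX u zz)
        refine memU_mono (Filter.inter_mem hS1 h1) ?_
        rintro m ⟨hm1, hm2⟩
        show zz n m ≠ xsq u zz m
        rw [show xsq u zz m = ubX u zz from hm1]
        exact hm2
      · have hS1c : S1ᶜ ∈ u := (Ultrafilter.compl_mem_iff_notMem).2 hS1
        refine hmain ((Ncᶜ ∩ Es) ∩ S1ᶜ) (Filter.inter_mem (Filter.inter_mem hNic hEs) hS1c)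
          (fun n hn => hn.1.1) (fun n hn => hn.1.2) ?_
        intro n hn
        have hnot : ¬ ({m | zz n m = xsq u zz m} ∈ u) := by
          intro hmem
          have hag : {m | xsq u zz m = zz n m} ∈ u := memU_mono hmem (fun m hm => hm.symm)
          have : ubX u zz = xsq u zz n := ubind_congr hag
          exact hn.2 this.symm
        exact (Ultrafilter.compl_mem_iff_notMem).2 hnot
end SS
end
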